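/- arXiv:0812.2589 — 8 statements merged into one kernel-verified Lean document; each statement's English description precedes it below -/
import Mathlib

section
/- Let t_1 < t_2 < ⋯ < t_{n+1} be distinct real points in an interval I. Then there exists a nonnegative function ψ supported on [t_1, t_{n+1}] with ∫ ψ(s) ds = 1 such that for every f ∈ C^n(I), the divided-difference combination ∑_{i=1}^{n+1} (-1)^{n+1-i} f(t_i) · V_n(t_1,…,t̂_i,…,t_{n+1}) / V_{n+1}(t_1,…,t_{n+1}) equals (1/n!) ∫ f^{(n)}(s) ψ(s) ds. -/
open MeasureTheory

/-- The Vandermonde product `∏_{i<j} (t j - t i)`. -/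
def vand {m : ℕ} (t : Fin m → ℝ) : ℝ :=
  ∏ p ∈ Finset.univ.filter (fun p : Fin m × Fin m => p.1 < p.2), (t p.2 - t p.1)

/-- The Vandermonde product of the `m` points obtained from `t` by omitting `t i`. -/
def vandOmit {m : ℕ} (t : Fin (m + 1) → ℝ) (i : Fin (m + 1)) : ℝ :=
  vand (t ∘ i.succAbove)

/-!
The left-hand side is the divided difference `[t_0, …, t_n] f = ∑ f(t_i) / ∏_{j ≠ i} (t_i - t_j)`,
which kills polynomials of degree `< n` and takes the value `1` on `x ^ n`. Expanding `f` by
Taylor's formula with integral remainder about `t_0` and exchanging the divided difference with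
the integral gives the Peano form `[t_0, …, t_n] f = (1 / (n-1)!) ∫ f^{(n)}(x) M(x) dx` with the
B-spline `M(x) = [t_0, …, t_n] (· - x)₊^{n-1}`, and `ψ = n M`. The B-spline vanishes off
`[t_0, t_n]`, has integral `1 / n` (test the Peano form on `x ^ n`), and is nonnegative by
induction on `n`: writing `y - x = ((t_n - x)(y - t_0) + (x - t_0)(y - t_n)) / (t_n - t_0)` turns it
into a combination with nonnegative coefficients, for `t_0 ≤ x ≤ t_n`, of the B-splines on
`t_1, …, t_n` and on `t_0, …, t_{n-1}`.
-/

open Finset Polynomial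
open scoped Nat

noncomputable def divDiff (s : Finset ℝ) : (ℝ → ℝ) →ₗ[ℝ] ℝ where
  toFun g := ∑ x ∈ s, g x / ∏ y ∈ s.erase x, (x - y)
  map_add' g h := by simp only [Pi.add_apply, add_div, sum_add_distrib]
  map_smul' c g := by
    simp only [Pi.smul_apply, smul_eq_mul, mul_div_assoc, ← mul_sum, RingHom.id_apply]

theorem divDiff_apply (s : Finset ℝ) (g : ℝ → ℝ) :
    divDiff s g = ∑ x ∈ s, g x / ∏ y ∈ s.erase x, (x - y) := rfl

theorem divDiff_add (s : Finset ℝ) (g h : ℝ → ℝ) :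
    divDiff s (fun y => g y + h y) = divDiff s g + divDiff s h :=
  (divDiff s).map_add g h

theorem divDiff_const_mul (s : Finset ℝ) (c : ℝ) (g : ℝ → ℝ) :
    divDiff s (fun y => c * g y) = c * divDiff s g :=
  (divDiff s).map_smul c g

theorem divDiff_congr {s : Finset ℝ} {g h : ℝ → ℝ} (hgh : ∀ y ∈ s, g y = h y) :
    divDiff s g = divDiff s h := by
  simp only [divDiff_apply]
  exact sum_congr rfl fun y hy => by rw [hgh y hy]

theorem divDiff_eval_eq_coeff {s : Finset ℝ} {P : ℝ[X]} (hP : P.degree < #s) :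
    divDiff s P.eval = P.coeff (#s - 1) :=
  (Lagrange.coeff_eq_sum (Set.injOn_id _) hP).symm

theorem divDiff_sub_pow_eq_zero {s : Finset ℝ} {j : ℕ} (hj : j + 1 < #s) (a : ℝ) :
    divDiff s (fun y => (y - a) ^ j) = 0 := by
  have hdeg : ((X - C a) ^ j).natDegree = j := by simp
  have hcoeff := divDiff_eval_eq_coeff (s := s) (P := (X - C a) ^ j)
    (by rw [degree_eq_natDegree (by simp [X_sub_C_ne_zero]), hdeg]; exact_mod_cast (by omega))
  simpa [coeff_eq_zero_of_natDegree_lt (hdeg.trans_lt (by omega : j < #s - 1))] using hcoeff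

theorem divDiff_pow_eq_one {s : Finset ℝ} {j : ℕ} (hs : #s = j + 1) :
    divDiff s (· ^ j) = 1 := by
  have hcoeff := divDiff_eval_eq_coeff (s := s) (P := X ^ j)
    (by rw [degree_X_pow, hs]; exact_mod_cast (by omega))
  simpa [hs] using hcoeff

theorem divDiff_sub_mul {s : Finset ℝ} {p : ℝ} (hp : p ∈ s) (g : ℝ → ℝ) :
    divDiff s (fun y => (y - p) * g y) = divDiff (s.erase p) g := by
  rw [divDiff_apply, divDiff_apply, ← add_sum_erase s _ hp, sub_self, zero_mul, zero_div, zero_add]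
  refine sum_congr rfl fun x hx => ?_
  have hxp : x - p ≠ 0 := sub_ne_zero.2 (ne_of_mem_erase hx)
  rw [← mul_prod_erase (s.erase x) _ (mem_erase.2 ⟨(ne_of_mem_erase hx).symm, hp⟩),
    erase_right_comm, mul_div_mul_left _ _ hxp]

theorem divDiff_pair {a b : ℝ} (hab : a ≠ b) (g : ℝ → ℝ) :
    divDiff {a, b} g = (g b - g a) / (b - a) := by
  have hba : b - a ≠ 0 := sub_ne_zero.2 hab.symm
  simp only [divDiff_apply, sum_pair hab, erase_insert_eq_erase, mem_singleton, hab,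
    not_false_eq_true, erase_eq_of_notMem, prod_singleton, erase_insert_of_ne hab, erase_singleton,
    insert_empty_eq]
  field_simp
  ring

theorem divDiff_intervalIntegral (s : Finset ℝ) {K : ℝ → ℝ → ℝ} {a b : ℝ}
    (hK : ∀ y ∈ s, IntervalIntegrable (K y) volume a b) :
    divDiff s (fun y => ∫ x in a..b, K y x) = ∫ x in a..b, divDiff s (fun y => K y x) := by
  simp only [divDiff_apply]
  rw [intervalIntegral.integral_finsetSum fun y hy => (hK y hy).div_const _]
  simp only [intervalIntegral.integral_div]

noncomputable def truncPow (k : ℕ) (y x : ℝ) : ℝ := (Set.Iic y).indicator (fun x => (y - x) ^ k) x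

theorem truncPow_of_le {k : ℕ} {x y : ℝ} (h : x ≤ y) : truncPow k y x = (y - x) ^ k :=
  Set.indicator_of_mem (Set.mem_Iic.2 h) _

theorem truncPow_of_lt {k : ℕ} {x y : ℝ} (h : y < x) : truncPow k y x = 0 :=
  Set.indicator_of_notMem (Set.notMem_Iic.2 h) _

theorem sub_mul_truncPow (k : ℕ) (y x : ℝ) :
    (y - x) * truncPow k y x = truncPow (k + 1) y x := by
  rcases le_or_gt x y with h | h
  · rw [truncPow_of_le h, truncPow_of_le h, pow_succ']
  · rw [truncPow_of_lt h, truncPow_of_lt h, mul_zero]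

noncomputable def bspline (k : ℕ) (s : Finset ℝ) (x : ℝ) : ℝ := divDiff s (fun y => truncPow k y x)

theorem bspline_eq_zero_of_lt {k : ℕ} {s : Finset ℝ} {x : ℝ} (h : ∀ y ∈ s, y < x) :
    bspline k s x = 0 := by
  rw [bspline, divDiff_congr fun y hy => truncPow_of_lt (h y hy)]
  exact map_zero _

theorem bspline_eq_zero_of_le {k : ℕ} {s : Finset ℝ} (hk : k + 2 ≤ #s) {x : ℝ}
    (h : ∀ y ∈ s, x ≤ y) : bspline k s x = 0 := by
  rw [bspline, divDiff_congr fun y hy => truncPow_of_le (h y hy)]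
  exact divDiff_sub_pow_eq_zero (by omega) x

theorem bspline_eq_zero_of_notMem_Ioc {k : ℕ} {s : Finset ℝ} (hk : k + 2 ≤ #s) {a b x : ℝ}
    (hs : ↑s ⊆ Set.Icc a b) (hx : x ∉ Set.Ioc a b) : bspline k s x = 0 := by
  rcases not_and_or.1 hx with hx | hx
  · exact bspline_eq_zero_of_le hk fun y hy => (not_lt.1 hx).trans (hs hy).1
  · exact bspline_eq_zero_of_lt fun y hy => (hs hy).2.trans_lt (not_le.1 hx)

theorem bspline_succ (k : ℕ) {s : Finset ℝ} {p q : ℝ} (hp : p ∈ s) (hq : q ∈ s) (hpq : p ≠ q)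
    (x : ℝ) : bspline (k + 1) s x =
      ((q - x) * bspline k (s.erase p) x + (x - p) * bspline k (s.erase q) x) / (q - p) := by
  have hqp : q - p ≠ 0 := sub_ne_zero.2 hpq.symm
  have hsplit : (fun y => truncPow (k + 1) y x) =
      ((q - x) / (q - p)) • (fun y => (y - p) * truncPow k y x) +
        ((x - p) / (q - p)) • (fun y => (y - q) * truncPow k y x) := by
    funext y
    simp only [Pi.add_apply, Pi.smul_apply, smul_eq_mul, ← sub_mul_truncPow]
    field_simp
    ring
  rw [bspline, hsplit, map_add, map_smul, map_smul, divDiff_sub_mul hp, divDiff_sub_mul hq,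
    smul_eq_mul, smul_eq_mul, bspline, bspline]
  field_simp

theorem bspline_nonneg {k : ℕ} {s : Finset ℝ} (hs : #s = k + 2) (x : ℝ) : 0 ≤ bspline k s x := by
  induction k generalizing s with
  | zero =>
    obtain ⟨a, b, hab, rfl⟩ := card_eq_two.1 hs
    have hmono : Monotone fun y => truncPow 0 y x := fun y z hyz => by
      simp only [truncPow, pow_zero]
      exact Set.indicator_le_indicator_of_subset (Set.Iic_subset_Iic.2 hyz)
        (fun _ => zero_le_one) x
    rw [bspline, divDiff_pair hab]
    rcases hab.lt_or_gt with h | h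
    · exact div_nonneg (sub_nonneg.2 (hmono h.le)) (sub_nonneg.2 h.le)
    · exact div_nonneg_of_nonpos (sub_nonpos.2 (hmono h.le)) (sub_nonpos.2 h.le)
  | succ k ih =>
    have hne : s.Nonempty := card_pos.1 (by omega)
    set p := s.min' hne
    set q := s.max' hne
    by_cases hxp : x ≤ p
    · exact (bspline_eq_zero_of_le hs.ge fun y hy => hxp.trans (min'_le s y hy)).ge
    by_cases hqx : q < x
    · exact (bspline_eq_zero_of_lt fun y hy => (le_max' s y hy).trans_lt hqx).ge
    have hpq : p < q := (not_le.1 hxp).trans_le (not_lt.1 hqx)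
    rw [bspline_succ k (min'_mem s hne) (max'_mem s hne) hpq.ne]
    have hcard : ∀ z ∈ s, #(s.erase z) = k + 2 := fun z hz => by
      rw [card_erase_of_mem hz, hs]; rfl
    refine div_nonneg (add_nonneg (mul_nonneg (by linarith) ?_) (mul_nonneg (by linarith) ?_))
      (by linarith)
    · exact ih (hcard p (min'_mem s hne))
    · exact ih (hcard q (max'_mem s hne))

theorem intervalIntegral_mul_truncPow (g : ℝ → ℝ) (k : ℕ) {a b y : ℝ} (hay : a ≤ y)
    (hyb : y ≤ b) :
    ∫ x in a..b, g x * truncPow k y x = ∫ x in a..y, g x * (y - x) ^ k := by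
  have hind : (fun x => g x * truncPow k y x) = (Set.Iic y).indicator fun x => g x * (y - x) ^ k :=
    funext fun x => (Set.indicator_mul_right _ _ _).symm
  rw [intervalIntegral.integral_of_le (hay.trans hyb), intervalIntegral.integral_of_le hay, hind,
    setIntegral_indicator measurableSet_Iic, Set.Ioc_inter_Iic, inf_eq_right.2 hyb]

theorem intervalIntegrable_mul_truncPow {g : ℝ → ℝ} {a b : ℝ}
    (hg : ContinuousOn g (Set.uIcc a b)) (k : ℕ) (y : ℝ) :
    IntervalIntegrable (fun x => g x * truncPow k y x) volume a b := by
  have hpow : IntervalIntegrable (fun x => (y - x) ^ k) volume a b :=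
    (by fun_prop : Continuous fun x : ℝ => (y - x) ^ k).intervalIntegrable a b
  have htrunc : IntervalIntegrable (truncPow k y) volume a b := by
    rw [intervalIntegrable_iff] at hpow ⊢
    exact hpow.indicator measurableSet_Iic
  exact htrunc.continuousOn_mul hg

theorem taylor_integral_remainder_of_uIcc_subset {f : ℝ → ℝ} {U : Set ℝ} (hU : UniqueDiffOn ℝ U)
    {k : ℕ} (hf : ContDiffOn ℝ (k + 1 : ℕ) f U) {a y : ℝ} (hay : Set.uIcc a y ⊆ U) :
    f y - taylorWithinEval f k U a y =
      ∫ x in a..y, (y - x) ^ k / k ! * iteratedDerivWithin (k + 1) f U x := by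
  rcases eq_or_ne a y with rfl | hne
  · simp
  have hI : UniqueDiffOn ℝ (Set.uIcc a y) := uniqueDiffOn_uIcc hne
  have hderiv : ∀ j ≤ k + 1, ∀ x ∈ Set.uIcc a y,
      iteratedDerivWithin j f (Set.uIcc a y) x = iteratedDerivWithin j f U x := fun j hj x hx => by
    simp only [iteratedDerivWithin_eq_iteratedFDerivWithin,
      iteratedFDerivWithin_subset hay hI hU (hf.of_le (by exact_mod_cast hj)) hx]
  have htaylor : taylorWithinEval f k U a y = taylorWithinEval f k (Set.uIcc a y) a y := by
    simp only [taylor_within_apply]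
    exact sum_congr rfl fun j hj => by
      rw [hderiv j (by simp at hj; omega) a Set.left_mem_uIcc]
  rw [htaylor, taylor_integral_remainder (hf.mono hay)]
  exact intervalIntegral.integral_congr fun x hx => by
    simp only [smul_eq_mul, hderiv (k + 1) le_rfl x hx]

theorem divDiff_taylorWithinEval {s : Finset ℝ} {k : ℕ} (hk : k + 2 ≤ #s) (f : ℝ → ℝ)
    (U : Set ℝ) (a : ℝ) : divDiff s (taylorWithinEval f k U a) = 0 := by
  have hsum : taylorWithinEval f k U a =
      ∑ j ∈ range (k + 1), fun y => (iteratedDerivWithin j f U a / j !) * (y - a) ^ j := by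
    funext y
    simp only [taylor_within_apply, Finset.sum_apply, smul_eq_mul]
    exact sum_congr rfl fun j _ => by ring
  rw [hsum, map_sum]
  refine sum_eq_zero fun j hj => ?_
  rw [divDiff_const_mul, divDiff_sub_pow_eq_zero (by simp at hj; omega), mul_zero]

theorem divDiff_eq_integral_mul_bspline {f : ℝ → ℝ} {U : Set ℝ} (hU : UniqueDiffOn ℝ U) {k : ℕ}
    (hf : ContDiffOn ℝ (k + 1 : ℕ) f U) {s : Finset ℝ} (hk : k + 2 ≤ #s) {a b : ℝ}
    (hs : ↑s ⊆ Set.Icc a b) (hab : Set.Icc a b ⊆ U) :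
    divDiff s f = 1 / k ! * ∫ x, iteratedDerivWithin (k + 1) f U x * bspline k s x := by
  set g := iteratedDerivWithin (k + 1) f U
  obtain ⟨c, hc⟩ : s.Nonempty := card_pos.1 (by omega)
  have hg : ContinuousOn g (Set.uIcc a b) := by
    rw [Set.uIcc_of_le ((hs hc).1.trans (hs hc).2)]
    exact (hf.continuousOn_iteratedDerivWithin le_rfl hU).mono hab
  have hexpand : ∀ y ∈ s,
      f y = taylorWithinEval f k U a y + 1 / k ! * ∫ x in a..b, g x * truncPow k y x := by
    intro y hy
    obtain ⟨hay, hyb⟩ := hs hy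
    rw [intervalIntegral_mul_truncPow g k hay hyb, ← intervalIntegral.integral_const_mul,
      ← sub_eq_iff_eq_add', taylor_integral_remainder_of_uIcc_subset hU hf
        ((Set.uIcc_of_le hay).trans_subset ((Set.Icc_subset_Icc_right hyb).trans hab))]
    exact intervalIntegral.integral_congr fun x _ => by ring
  rw [divDiff_congr hexpand, divDiff_add, divDiff_taylorWithinEval hk, zero_add,
    divDiff_const_mul, divDiff_intervalIntegral s fun y _ => intervalIntegrable_mul_truncPow hg k y]
  simp only [divDiff_const_mul]
  rw [intervalIntegral.integral_eq_integral_of_support_subset]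
  · rfl
  · intro x hx
    by_contra hx'
    exact hx (mul_eq_zero_of_right _ (bspline_eq_zero_of_notMem_Ioc hk hs hx'))

theorem integral_bspline {k : ℕ} {s : Finset ℝ} (hs : #s = k + 2) :
    ∫ x, bspline k s x = 1 / (k + 1) := by
  have hne : s.Nonempty := card_pos.1 (by omega)
  have h := divDiff_eq_integral_mul_bspline uniqueDiffOn_univ (f := (· ^ (k + 1)))
    (by fun_prop) hs.ge (a := s.min' hne) (b := s.max' hne)
    (fun y hy => ⟨min'_le s y hy, le_max' s y hy⟩) (Set.subset_univ _)
  rw [divDiff_pow_eq_one hs] at h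
  simp only [iteratedDerivWithin_univ, iteratedDeriv_pow, Nat.descFactorial_self, Nat.sub_self,
    pow_zero, mul_one, integral_const_mul, Nat.factorial_succ, Nat.cast_mul] at h
  have hk : (k ! : ℝ) ≠ 0 := by positivity
  field_simp at h ⊢
  push_cast at h
  linarith

theorem vand_ne_zero {m : ℕ} {t : Fin m → ℝ} (ht : Function.Injective t) : vand t ≠ 0 :=
  prod_ne_zero_iff.2 fun _ hp => sub_ne_zero.2 (ht.ne (mem_filter.1 hp).2.ne')

theorem vand_eq_prod_ite {m : ℕ} (t : Fin m → ℝ) :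
    vand t = ∏ a, ∏ b, if a < b then t b - t a else 1 := by
  rw [vand, prod_filter, Fintype.prod_prod_type]

theorem prod_succAbove_sign {m : ℕ} (i : Fin (m + 1)) :
    ∏ b, (if i < i.succAbove b then (-1 : ℝ) else 1) = (-1) ^ (m - i) := by
  have h := Fin.prod_univ_succAbove (fun j => if i < j then (-1 : ℝ) else 1) i
  rw [if_neg (lt_irrefl i), one_mul] at h
  rw [← h, prod_ite, prod_const, prod_const_one, mul_one, filter_lt_eq_Ioi, Fin.card_Ioi,
    Nat.add_sub_cancel]

theorem vand_eq_mul_vandOmit {m : ℕ} (t : Fin (m + 1) → ℝ) (i : Fin (m + 1)) :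
    vand t = (-1) ^ (m - (i : ℕ)) * (∏ b, (t i - t (i.succAbove b))) * vandOmit t i := by
  rw [vandOmit, vand_eq_prod_ite, vand_eq_prod_ite, Fin.prod_univ_succAbove _ i]
  simp_rw [Fin.prod_univ_succAbove _ i, lt_irrefl, if_false, one_mul,
    Fin.succAbove_lt_succAbove_iff, prod_mul_distrib, Function.comp_apply, ← mul_assoc]
  congr 1
  rw [← prod_succAbove_sign i, ← prod_mul_distrib, ← prod_mul_distrib]
  refine prod_congr rfl fun b _ => ?_
  rcases (Fin.succAbove_ne i b).lt_or_gt with h | h <;> simp [h, h.not_gt]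

theorem prod_erase_image_sub {m : ℕ} {t : Fin (m + 1) → ℝ} (ht : Function.Injective t)
    (i : Fin (m + 1)) :
    ∏ y ∈ (univ.image t).erase (t i), (t i - y) = ∏ b, (t i - t (i.succAbove b)) := by
  rw [← image_erase ht, prod_image ht.injOn, ← compl_singleton, ← Fin.image_succAbove_univ,
    prod_image Fin.succAbove_right_injective.injOn]

theorem sum_vand_eq_divDiff {m : ℕ} {t : Fin (m + 1) → ℝ} (ht : Function.Injective t)
    (f : ℝ → ℝ) :
    ∑ i : Fin (m + 1), (-1 : ℝ) ^ (m - (i : ℕ)) * f (t i) * vandOmit t i / vand t =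
      divDiff (univ.image t) f := by
  rw [divDiff_apply, sum_image fun i _ j _ h => ht h]
  refine sum_congr rfl fun i _ => ?_
  have hsign : (-1 : ℝ) ^ (m - (i : ℕ)) ≠ 0 := pow_ne_zero _ (by norm_num)
  have homit : vandOmit t i ≠ 0 := vand_ne_zero (ht.comp Fin.succAbove_right_injective)
  rw [prod_erase_image_sub ht, vand_eq_mul_vandOmit t i]
  field_simp

/-- given `t_1 < ⋯ < t_{n+1}` in an interval `I`, there is a nonnegative
`ψ` supported on `[t_1, t_{n+1}]` with total integral one such that for every
`f ∈ C^n(I)` the divided-difference combination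
`∑ (-1)^{n+1-i} f(t_i) V_n(t_1,…,t̂_i,…,t_{n+1}) / V_{n+1}(t)` equals
`(1/n!) ∫ f^{(n)}(s) ψ(s) ds`. -/
theorem statement1 (n : ℕ) (hn : 0 < n) (A B : ℝ) (t : Fin (n + 1) → ℝ)
    (ht : StrictMono t) (htI : ∀ i, t i ∈ Set.Ioo A B) :
    ∃ ψ : ℝ → ℝ, (∀ s, 0 ≤ ψ s) ∧
      (∀ s ∉ Set.Icc (t 0) (t (Fin.last n)), ψ s = 0) ∧
      (∫ s, ψ s) = 1 ∧
      ∀ f : ℝ → ℝ, ContDiffOn ℝ n f (Set.Ioo A B) →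
        ∑ i : Fin (n + 1), (-1 : ℝ) ^ (n - (i : ℕ)) * f (t i) * vandOmit t i / vand t
          = (1 / (n.factorial : ℝ)) *
              ∫ s, iteratedDerivWithin n f (Set.Ioo A B) s * ψ s := by
  obtain ⟨k, rfl⟩ : ∃ k, n = k + 1 := ⟨n - 1, by omega⟩
  set s := univ.image t
  have hs : #s = k + 2 := by
    rw [card_image_of_injective _ ht.injective, card_univ, Fintype.card_fin]
  have hsIcc : ↑s ⊆ Set.Icc (t 0) (t (Fin.last (k + 1))) := by
    simp only [s, coe_image, coe_univ, Set.image_univ, Set.range_subset_iff]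
    exact fun i => ⟨ht.monotone (Fin.zero_le i), ht.monotone (Fin.le_last i)⟩
  refine ⟨fun x => (k + 1) * bspline k s x,
    fun x => mul_nonneg (by positivity) (bspline_nonneg hs x), fun x hx => mul_eq_zero_of_right _
      (bspline_eq_zero_of_notMem_Ioc hs.ge hsIcc fun h => hx (Set.Ioc_subset_Icc_self h)),
    ?_, fun f hf => ?_⟩
  · rw [integral_const_mul, integral_bspline hs]
    field_simp
  · rw [sum_vand_eq_divDiff ht.injective, divDiff_eq_integral_mul_bspline
      isOpen_Ioo.uniqueDiffOn hf hs.ge hsIcc (Set.Icc_subset_Ioo (htI 0).1 (htI _).2)]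
    simp_rw [mul_left_comm _ ((k + 1 : ℝ)), integral_const_mul, Nat.factorial_succ]
    push_cast
    field_simp
end

section
/- Let t_1 < ⋯ < t_{n+1} be distinct real points. The function ψ(s) := ∑_{i : t_i > s} n(t_i − s)^{n−1} / ∏_{j ≠ i}(t_i − t_j) is nonnegative everywhere. -/
/-!
Up to the factor `n`, `ψ(s)` is the divided difference `[t₁, …, t_{n+1}]` of the truncated power
`y ↦ (y - s)₊^{n-1}`, i.e. a B-spline. Divided differences satisfy the de Boor–Cox recurrence
`(b - a) [T] (y - s) h = (b - s) [T \ a] h + (s - a) [T \ b] h` for any nodes `a, b ∈ T`. Taking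
`a, b` the extreme nodes, both coefficients are nonnegative when `a ≤ s < b`, so nonnegativity
passes from `n - 1` to `n`; when `s < a` the truncated power is a polynomial of too small a degree
on the nodes and when `b ≤ s` it vanishes there. For two nodes the divided difference of the
monotone step function is a nonnegative slope.
-/

/-- The explicit kernel `ψ(s) = ∑_{i : t_i > s} n (t_i - s)^{n-1} / ∏_{j ≠ i} (t_i - t_j)`. -/
noncomputable def psiKer (n : ℕ) (t : Fin (n + 1) → ℝ) (s : ℝ) : ℝ :=
  ∑ i : Fin (n + 1),
    if s < t i then (n : ℝ) * (t i - s) ^ (n - 1) / ∏ j ∈ Finset.univ.erase i, (t i - t j)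
    else 0

open Finset

noncomputable def dividedDifference {ι : Type*} [DecidableEq ι] (s : Finset ι) (v : ι → ℝ)
    (g : ℝ → ℝ) : ℝ :=
  ∑ i ∈ s, g (v i) / ∏ j ∈ s.erase i, (v i - v j)

noncomputable def truncatedPower (k : ℕ) (x y : ℝ) : ℝ :=
  if x < y then (y - x) ^ k else 0

namespace dividedDifference

variable {ι : Type*} [DecidableEq ι] {s : Finset ι} {v : ι → ℝ}

theorem congr {f g : ℝ → ℝ} (h : ∀ i ∈ s, f (v i) = g (v i)) :
    dividedDifference s v f = dividedDifference s v g :=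
  sum_congr rfl fun i hi => by rw [h i hi]

theorem eq_zero {g : ℝ → ℝ} (h : ∀ i ∈ s, g (v i) = 0) : dividedDifference s v g = 0 :=
  sum_eq_zero fun i hi => by rw [h i hi, zero_div]

theorem pair_eq_slope {a b : ι} (hab : a ≠ b) (g : ℝ → ℝ) :
    dividedDifference {a, b} v g = slope g (v a) (v b) := by
  rw [dividedDifference, sum_pair hab, erase_insert (notMem_singleton.mpr hab),
    erase_insert_of_ne hab, erase_singleton, insert_empty_eq, prod_singleton, prod_singleton,
    slope_def_field, ← neg_sub (v b) (v a), div_neg, neg_add_eq_sub, div_sub_div_same]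

theorem sub_mul_eq_erase (hvs : Set.InjOn v s) {a : ι} (ha : a ∈ s) (h : ℝ → ℝ) :
    dividedDifference s v (fun y => (y - v a) * h y) = dividedDifference (s.erase a) v h := by
  rw [dividedDifference, ← add_sum_erase _ _ ha, sub_self, zero_mul, zero_div, zero_add]
  refine sum_congr rfl fun i hi => ?_
  have hia : i ≠ a := ne_of_mem_erase hi
  have hvia : v i - v a ≠ 0 := sub_ne_zero.mpr fun h => hia (hvs (mem_of_mem_erase hi) ha h)
  rw [← mul_prod_erase _ _ (mem_erase.mpr ⟨hia.symm, ha⟩), erase_right_comm,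
    mul_div_mul_left _ _ hvia]

theorem sub_mul_eq_erase_add (hvs : Set.InjOn v s) {a : ι} (ha : a ∈ s) (c : ℝ) (h : ℝ → ℝ) :
    dividedDifference s v (fun y => (y - c) * h y) =
      dividedDifference (s.erase a) v h + (v a - c) * dividedDifference s v h := by
  rw [← sub_mul_eq_erase hvs ha, dividedDifference, dividedDifference, dividedDifference, mul_sum,
    ← sum_add_distrib]
  exact sum_congr rfl fun i _ => by ring

theorem sub_mul_recurrence (hvs : Set.InjOn v s) {a b : ι} (ha : a ∈ s) (hb : b ∈ s)
    (x : ℝ) (h : ℝ → ℝ) :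
    (v b - v a) * dividedDifference s v (fun y => (y - x) * h y) =
      (v b - x) * dividedDifference (s.erase a) v h +
        (x - v a) * dividedDifference (s.erase b) v h := by
  linear_combination
    (v b - x) * sub_mul_eq_erase_add hvs ha x h - (v a - x) * sub_mul_eq_erase_add hvs hb x h

theorem eval_eq_coeff (hvs : Set.InjOn v s) {P : Polynomial ℝ} (hP : P.degree < #s) :
    dividedDifference s v (fun y => P.eval y) = P.coeff (#s - 1) :=
  (Lagrange.coeff_eq_sum hvs hP).symm

theorem sub_pow_eq_zero (hvs : Set.InjOn v s) {k : ℕ} (hk : k + 2 ≤ #s) (x : ℝ) :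
    dividedDifference s v (fun y => (y - x) ^ k) = 0 := by
  have hdeg : ((Polynomial.X - Polynomial.C x) ^ k).natDegree = k := by
    simp [Polynomial.natDegree_pow]
  have := eval_eq_coeff hvs (P := (Polynomial.X - Polynomial.C x) ^ k) (by
    rw [Polynomial.degree_eq_natDegree (pow_ne_zero _ (Polynomial.X_sub_C_ne_zero x)), hdeg]
    exact_mod_cast (by omega : k < #s))
  simpa [Polynomial.coeff_eq_zero_of_natDegree_lt (hdeg ▸ (by omega : k < #s - 1))] using this

end dividedDifference

theorem truncatedPower_monotone (k : ℕ) (x : ℝ) : Monotone (truncatedPower k x) := by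
  intro y z hyz
  unfold truncatedPower
  split_ifs with hy hz hz
  · exact pow_le_pow_left₀ (sub_nonneg.mpr hy.le) (sub_le_sub_right hyz x) k
  · exact absurd (hy.trans_le hyz) hz
  · exact pow_nonneg (sub_nonneg.mpr hz.le) k
  · exact le_rfl

theorem truncatedPower_succ (k : ℕ) (x y : ℝ) :
    truncatedPower (k + 1) x y = (y - x) * truncatedPower k x y := by
  unfold truncatedPower
  split_ifs <;> ring

theorem dividedDifference_truncatedPower_nonneg {ι : Type*} [DecidableEq ι] (k : ℕ)
    {s : Finset ι} (hs : #s = k + 2) {v : ι → ℝ} (hvs : Set.InjOn v s) (x : ℝ) :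
    0 ≤ dividedDifference s v (truncatedPower k x) := by
  induction k generalizing s with
  | zero =>
    obtain ⟨a, b, hab, rfl⟩ := card_eq_two.mp hs
    rw [dividedDifference.pair_eq_slope hab]
    exact ((truncatedPower_monotone 0 x).monotoneOn _).slope_nonneg (Set.mem_univ _)
      (Set.mem_univ _)
  | succ k ih =>
    have hne : s.Nonempty := card_pos.mp (by omega)
    obtain ⟨a, ha, hmin⟩ := s.exists_min_image v hne
    obtain ⟨b, hb, hmax⟩ := s.exists_max_image v hne
    by_cases hxa : x < v a
    · have hpoly : ∀ i ∈ s, truncatedPower (k + 1) x (v i) = (v i - x) ^ (k + 1) :=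
        fun i hi => if_pos (hxa.trans_le (hmin i hi))
      rw [dividedDifference.congr (g := fun y => (y - x) ^ (k + 1)) hpoly,
        dividedDifference.sub_pow_eq_zero hvs (by omega)]
    by_cases hbx : v b ≤ x
    · exact (dividedDifference.eq_zero fun i hi =>
        if_neg (not_lt.mpr ((hmax i hi).trans hbx))).ge
    have hab : 0 < v b - v a := by linarith
    have hrec := dividedDifference.sub_mul_recurrence hvs ha hb x (truncatedPower k x)
    simp only [← truncatedPower_succ] at hrec
    have hsa := ih (s := s.erase a) (by rw [card_erase_of_mem ha]; omega) (hvs.mono (by simp))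
    have hsb := ih (s := s.erase b) (by rw [card_erase_of_mem hb]; omega) (hvs.mono (by simp))
    refine nonneg_of_mul_nonneg_right (hrec ▸ ?_) hab
    exact add_nonneg (mul_nonneg (by linarith) hsa) (mul_nonneg (by linarith) hsb)

theorem psiKer_eq_mul_dividedDifference (n : ℕ) (t : Fin (n + 1) → ℝ) (x : ℝ) :
    psiKer n t x = n * dividedDifference univ t (truncatedPower (n - 1) x) := by
  rw [dividedDifference, mul_sum]
  refine sum_congr rfl fun i _ => ?_
  unfold truncatedPower
  split_ifs <;> ring

theorem statement3_general (n : ℕ) (t : Fin (n + 1) → ℝ) (ht : StrictMono t) :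
    ∀ s : ℝ, 0 ≤ psiKer n t s := by
  intro s
  rw [psiKer_eq_mul_dividedDifference]
  rcases n with _ | k
  · simp
  · exact mul_nonneg (Nat.cast_nonneg _) <| dividedDifference_truncatedPower_nonneg k
      (by simp) ht.injective.injOn s

/-- for distinct increasing `t_1, …, t_{n+1}` the kernel `ψ` is
nonnegative everywhere. -/
theorem statement3 (n : ℕ) (hn : 0 < n) (t : Fin (n + 1) → ℝ) (ht : StrictMono t) :
    ∀ s : ℝ, 0 ≤ psiKer n t s :=
  statement3_general n t ht
end

section
/- Let μ be a regular Borel probability measure on an interval I and n a positive integer. Define ℓ_n(μ)^n := (∫ |V_{n+1}(t_1,…,t_{n+1})| dμ^{n+1}) / (∫ |V_n(t_1,…,t_n)| dμ^n). Then ℓ_n(μ) = 0 if and only if μ is supported on a set of at most n points. -/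
/-!
The integral vanishes iff `n + 1` independent `μ`-samples are almost surely not pairwise
distinct, since the Vandermonde product vanishes exactly at non-injective tuples. If `μ` lives on at most
`n` points this holds by pigeonhole. Conversely, `n + 1` distinct points of the support of `μ`
have pairwise disjoint open neighbourhoods of positive measure; their product is a box of
positive `μ^{n+1}`-measure consisting of injective tuples. So the support has at most `n`
points, and it is conull because `ℝ` is second countable.
-/

open MeasureTheory

theorem vand_eq_zero_iff {m : ℕ} {t : Fin m → ℝ} : vand t = 0 ↔ ¬ Function.Injective t := by
  simp only [vand, Finset.prod_eq_zero_iff, Finset.mem_filter, Finset.mem_univ, true_and,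
    sub_eq_zero, Function.Injective, not_forall]
  constructor
  · rintro ⟨⟨i, j⟩, hij, heq⟩
    exact ⟨j, i, heq, hij.ne'⟩
  · rintro ⟨i, j, heq, hij⟩
    rcases lt_or_gt_of_ne hij with hlt | hlt
    · exact ⟨(i, j), hlt, heq.symm⟩
    · exact ⟨(j, i), hlt, heq⟩

theorem continuous_vand {m : ℕ} : Continuous (vand (m := m)) := by
  unfold vand
  fun_prop

theorem lintegral_abs_vand_eq_zero_iff {m : ℕ} (ν : Measure (Fin m → ℝ)) :
    ∫⁻ t, ENNReal.ofReal |vand t| ∂ν = 0 ↔ ν {t | Function.Injective t} = 0 := by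
  rw [lintegral_eq_zero_iff continuous_vand.abs.measurable.ennreal_ofReal,
    Filter.EventuallyEq, ae_iff]
  simp [vand_eq_zero_iff]

namespace MeasureTheory.Measure

variable {X ι : Type*} [MeasurableSpace X] [Fintype ι] {μ : Measure X}

theorem pi_setOf_injective_eq_zero_of_measure_compl_finset_eq_zero [SigmaFinite μ]
    (S : Finset X) (hS : S.card < Fintype.card ι) (hμS : μ (↑S)ᶜ = 0) :
    Measure.pi (fun _ : ι => μ) {t | Function.Injective t} = 0 := by
  have hsub : {t : ι → X | Function.Injective t} ⊆ ⋃ i, Function.eval i ⁻¹' (↑S)ᶜ := by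
    intro t ht
    by_contra hmem
    simp only [Set.mem_iUnion, Set.mem_preimage, Function.eval, Set.mem_compl_iff,
      Finset.mem_coe, not_exists, not_not] at hmem
    have := Finset.card_le_card_of_injOn (s := Finset.univ) t (fun i _ => hmem i) ht.injOn
    exact hS.not_ge (by simpa using this)
  exact measure_mono_null hsub (measure_iUnion_null fun i => pi_eval_preimage_null _ hμS)

variable [TopologicalSpace X] [T2Space X]

theorem card_lt_of_pi_setOf_injective_eq_zero [SigmaFinite μ]
    (h : Measure.pi (fun _ : ι => μ) {t | Function.Injective t} = 0)
    {s : Finset X} (hs : ↑s ⊆ μ.support) : s.card < Fintype.card ι := by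
  by_contra! hcard
  obtain ⟨e⟩ : Nonempty (ι ↪ s) := Function.Embedding.nonempty_of_card_le (by simpa using hcard)
  let x : ι → X := fun i => e i
  obtain ⟨U, hU, hdisj⟩ := s.finite_toSet.t2_separation
  have hbox : Set.univ.pi (fun i => U (x i)) ⊆ {t | Function.Injective t} := by
    intro t ht i j hij
    have hi := ht i (Set.mem_univ i)
    have hj := ht j (Set.mem_univ j)
    rw [hij] at hi
    have hxij : x i = x j := by
      by_contra hne
      exact Set.disjoint_left.1 (hdisj (e i).2 (e j).2 hne) hi hj
    exact e.injective (Subtype.ext hxij)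
  have hpos : ∀ i, 0 < μ (U (x i)) := fun i =>
    (mem_support_iff_forall _).1 (hs (e i).2) _ ((hU _).2.mem_nhds (hU _).1)
  have := measure_mono_null hbox h
  rw [pi_pi, Finset.prod_eq_zero_iff] at this
  obtain ⟨i, -, hi⟩ := this
  exact (hpos i).ne' hi

theorem pi_setOf_injective_eq_zero_iff [SigmaFinite μ] [HereditarilyLindelofSpace X] :
    Measure.pi (fun _ : ι => μ) {t | Function.Injective t} = 0 ↔
      ∃ S : Finset X, S.card < Fintype.card ι ∧ μ (↑S)ᶜ = 0 := by
  refine ⟨fun h => ?_, fun ⟨S, hS, hμS⟩ =>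
    pi_setOf_injective_eq_zero_of_measure_compl_finset_eq_zero S hS hμS⟩
  have hfin : μ.support.Finite := by
    by_contra hinf
    obtain ⟨s, hs, hcard⟩ := Set.Infinite.exists_subset_card_eq hinf (Fintype.card ι)
    exact (card_lt_of_pi_setOf_injective_eq_zero h hs).ne hcard
  refine ⟨hfin.toFinset, card_lt_of_pi_setOf_injective_eq_zero h (by simp), ?_⟩
  rw [hfin.coe_toFinset]
  exact measure_compl_support

end MeasureTheory.Measure

theorem statement7_general (n : ℕ) (μ : Measure ℝ) [IsProbabilityMeasure μ] :
    (∫⁻ t : Fin (n + 1) → ℝ, ENNReal.ofReal |vand t| ∂(Measure.pi fun _ => μ)) = 0 ↔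
      ∃ S : Finset ℝ, S.card ≤ n ∧ μ (↑S)ᶜ = 0 := by
  rw [lintegral_abs_vand_eq_zero_iff, Measure.pi_setOf_injective_eq_zero_iff]
  simp only [Fintype.card_fin, Nat.lt_succ_iff]

/-- for a Borel probability measure `μ`, the quantity
`ℓ_n(μ)` vanishes (equivalently `∫ |V_{n+1}| dμ^{n+1} = 0`) if and only if `μ` is
supported on a set of at most `n` points. -/
theorem statement7 (n : ℕ) (hn : 0 < n) (μ : Measure ℝ) [IsProbabilityMeasure μ] :
    (∫⁻ t : Fin (n + 1) → ℝ, ENNReal.ofReal |vand t| ∂(Measure.pi fun _ => μ)) = 0 ↔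
      ∃ S : Finset ℝ, S.card ≤ n ∧ μ (↑S)ᶜ = 0 :=
  statement7_general n μ
end

section
/- Let μ be a regular Borel probability measure on an interval I, not supported on n or fewer points, let ℓ_n(μ) be as defined via the Vandermonde ratio, and fix ε ∈ (0,1). Then there exist at most n disjoint closed intervals I_1,…,I_k (possibly degenerate) such that μ(⋃_j I_j) ≥ 1 − ε, the total Lebesgue measure |⋃_j I_j| ≤ C_{n,ε} · ℓ_n(μ), and μ(I_j) ≥ ε/(2n) for each j. -/
/-!
Split `t ∈ ℝⁿ⁺¹` as `(x, s)` with `s ∈ ℝⁿ`. Then `|V_{n+1}(x, s)| = |V_n(s)| ∏ⱼ |sⱼ - x|`, so by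
Tonelli `∫ |V_{n+1}| dμⁿ⁺¹` is the integral of `s ↦ ∫ ∏ⱼ |sⱼ - x| dμ(x)` against the finite
measure `|V_n| dμⁿ`, whose total mass is `∫ |V_n| dμⁿ`. The average is thus `ℓⁿ`, so at some `s`
the inner integral is at most `ℓⁿ`. By Markov's inequality the sublevel set
`{x : ∏ⱼ |sⱼ - x| < (2/ε) ℓⁿ}` has mass at least `1 - ε/2`, and it lies in the `n` intervals
`[sⱼ - r, sⱼ + r]` with `rⁿ = (2/ε) ℓⁿ`. Merging overlapping intervals and discarding those of
mass below `ε/(2n)` loses at most `ε/2` more. The support hypothesis is what makes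
`∫ |V_{n+1}| dμⁿ⁺¹`, hence `ℓ`, positive.
-/

open MeasureTheory

open Set
open scoped ENNReal

lemma measurable_vand {m : ℕ} : Measurable (vand (m := m)) := by
  unfold vand
  fun_prop

lemma vand_eq_prod_Ioi {m : ℕ} (t : Fin m → ℝ) :
    vand t = ∏ i, ∏ j ∈ Finset.Ioi i, (t j - t i) := by
  rw [vand, ← Finset.prod_sigma Finset.univ (fun i => Finset.Ioi i) (fun p => t p.2 - t p.1)]
  apply Finset.prod_nbij' (fun p => (⟨p.1, p.2⟩ : (_ : Fin m) × Fin m)) (fun p => (p.1, p.2)) <;>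
    simp

lemma vand_cons {m : ℕ} (x : ℝ) (s : Fin m → ℝ) :
    vand (Fin.cons x s) = (∏ j, (s j - x)) * vand s := by
  rw [vand_eq_prod_Ioi, Fin.prod_univ_succ, Fin.prod_Ioi_zero, vand_eq_prod_Ioi]
  simp [Fin.prod_Ioi_succ]

noncomputable def vandLIntegral (μ : Measure ℝ) (m : ℕ) : ℝ≥0∞ :=
  ∫⁻ t, ‖vand t‖ₑ ∂(Measure.pi fun _ : Fin m => μ)

lemma ofReal_integral_abs_vand {μ : Measure ℝ} {m : ℕ}
    (h : Integrable (fun t : Fin m → ℝ => |vand t|) (Measure.pi fun _ => μ)) :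
    ENNReal.ofReal (∫ t : Fin m → ℝ, |vand t| ∂(Measure.pi fun _ => μ)) = vandLIntegral μ m :=
  ofReal_integral_norm_eq_lintegral_enorm
    ((integrable_norm_iff measurable_vand.aestronglyMeasurable).1 h)

lemma vandLIntegral_succ (μ : Measure ℝ) [SigmaFinite μ] (m : ℕ) :
    vandLIntegral μ (m + 1) =
      ∫⁻ s, (∫⁻ x, ‖∏ j, (s j - x)‖ₑ ∂μ) * ‖vand s‖ₑ ∂(Measure.pi fun _ : Fin m => μ) := by
  have hF : Measurable fun z : ℝ × (Fin m → ℝ) => ‖vand (Fin.cons z.1 z.2 : Fin (m + 1) → ℝ)‖ₑ :=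
    (measurable_vand.comp (by fun_prop)).enorm
  set e := MeasurableEquiv.piFinSuccAbove (fun _ : Fin (m + 1) => ℝ) 0
  have he : ∀ t, (Fin.cons (e t).1 (e t).2 : Fin (m + 1) → ℝ) = t := Fin.cons_self_tail
  calc vandLIntegral μ (m + 1)
      = ∫⁻ t, ‖vand (Fin.cons (e t).1 (e t).2 : Fin (m + 1) → ℝ)‖ₑ ∂(Measure.pi fun _ => μ) := by
        simp only [he, vandLIntegral]
    _ = _ := (measurePreserving_piFinSuccAbove (fun _ => μ) 0).lintegral_comp hF
    _ = _ := lintegral_prod_symm _ hF.aemeasurable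
    _ = _ := by
      congr 1 with s
      simp only [vand_cons, enorm_mul]
      exact lintegral_mul_const _ (by fun_prop)

lemma measurable_lintegral_enorm_prod_sub (μ : Measure ℝ) [SFinite μ] (m : ℕ) :
    Measurable fun s : Fin m → ℝ => ∫⁻ x, ‖∏ j, (s j - x)‖ₑ ∂μ :=
  Measurable.lintegral_prod_right' (f := fun z : (Fin m → ℝ) × ℝ => ‖∏ j, (z.1 j - z.2)‖ₑ)
    (by fun_prop)

lemma lintegral_enorm_prod_sub_pos {μ : Measure ℝ} {m : ℕ}
    (hμ : ∀ S : Finset ℝ, S.card ≤ m → μ (↑S)ᶜ ≠ 0) (s : Fin m → ℝ) :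
    0 < ∫⁻ x, ‖∏ j, (s j - x)‖ₑ ∂μ := by
  classical
  have hsupp : Function.support (fun x => ‖∏ j, (s j - x)‖ₑ) = (↑(Finset.univ.image s))ᶜ := by
    ext x
    simp [Finset.prod_eq_zero_iff, sub_eq_zero]
  rw [lintegral_pos_iff_support (by fun_prop), hsupp]
  exact pos_iff_ne_zero.2 (hμ _ (Finset.card_image_le.trans (by simp)))

lemma vandLIntegral_pos {μ : Measure ℝ} [SigmaFinite μ] {n : ℕ}
    (hμ : ∀ S : Finset ℝ, S.card ≤ n → μ (↑S)ᶜ ≠ 0) : ∀ m ≤ n + 1, 0 < vandLIntegral μ m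
  | 0, _ => by simp [vandLIntegral, vand]
  | m + 1, hm => by
    have hG := measurable_lintegral_enorm_prod_sub μ m
    have hW : Measurable fun s : Fin m → ℝ => ‖vand s‖ₑ := measurable_vand.enorm
    have hsupp : Function.support (fun s : Fin m → ℝ => (∫⁻ x, ‖∏ j, (s j - x)‖ₑ ∂μ) * ‖vand s‖ₑ)
        = Function.support fun s => ‖vand s‖ₑ := by
      ext s
      simp [(lintegral_enorm_prod_sub_pos (fun S hS => hμ S (hS.trans (by omega))) s).ne']
    rw [vandLIntegral_succ, lintegral_pos_iff_support (by exact hG.mul hW), hsupp,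
      ← lintegral_pos_iff_support hW]
    exact vandLIntegral_pos hμ m (by omega)

lemma exists_lintegral_enorm_prod_sub_le (μ : Measure ℝ) [SigmaFinite μ] {n : ℕ}
    (h0 : vandLIntegral μ n ≠ 0) (htop : vandLIntegral μ n ≠ ∞) :
    ∃ s : Fin n → ℝ,
      ∫⁻ x, ‖∏ j, (s j - x)‖ₑ ∂μ ≤ vandLIntegral μ (n + 1) / vandLIntegral μ n := by
  set ν := (Measure.pi fun _ : Fin n => μ).withDensity fun s => ‖vand s‖ₑ
  have hW : Measurable fun s : Fin n → ℝ => ‖vand s‖ₑ := measurable_vand.enorm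
  have hG := measurable_lintegral_enorm_prod_sub μ n
  have hνuniv : ν univ = vandLIntegral μ n := by
    rw [withDensity_apply _ MeasurableSet.univ, Measure.restrict_univ, vandLIntegral]
  have : IsFiniteMeasure ν := isFiniteMeasure_withDensity htop
  have hν : ν ≠ 0 := fun h => h0 (by rw [← hνuniv, h, Measure.coe_zero, Pi.zero_apply])
  obtain ⟨s, hs⟩ := exists_le_laverage hν hG.aemeasurable
  refine ⟨s, hs.trans_eq ?_⟩
  rw [laverage_eq, hνuniv, lintegral_withDensity_eq_lintegral_mul _ hW hG, vandLIntegral_succ]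
  simp_rw [Pi.mul_apply, mul_comm]

lemma measure_compl_iUnion_Icc_le {ι : Type*} [Fintype ι] (μ : Measure ℝ) (s : ι → ℝ) {r : ℝ}
    (hr : 0 < r) :
    μ (⋃ j, Icc (s j - r) (s j + r))ᶜ ≤
      (∫⁻ x, ‖∏ j, (s j - x)‖ₑ ∂μ) / ENNReal.ofReal (r ^ Fintype.card ι) := by
  refine (measure_mono fun x hx => ?_).trans
    (meas_ge_le_lintegral_div (by fun_prop) (by positivity) ENNReal.ofReal_ne_top)
  simp only [mem_compl_iff, mem_iUnion, mem_Icc, not_exists, not_and_or, not_le] at hx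
  have hfar : ∀ j, r ≤ |s j - x| := fun j => by
    rcases hx j with h | h
    · exact le_abs.2 (Or.inl (by linarith))
    · exact le_abs.2 (Or.inr (by linarith))
  rw [mem_ofPred_eq, Real.enorm_eq_ofReal_abs, Finset.abs_prod]
  refine ENNReal.ofReal_le_ofReal ?_
  calc r ^ Fintype.card ι = ∏ _j : ι, r := by simp
    _ ≤ ∏ j, |s j - x| := Finset.prod_le_prod (fun _ _ => hr.le) (fun j _ => hfar j)

lemma volume_iUnion_Icc_le {ι : Type*} [Fintype ι] (s : ι → ℝ) (r : ℝ) :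
    volume (⋃ j, Icc (s j - r) (s j + r)) ≤ ENNReal.ofReal (2 * Fintype.card ι * r) := by
  refine (measure_iUnion_fintype_le _ _).trans_eq ?_
  simp only [Real.volume_Icc, add_sub_sub_cancel, Finset.sum_const, Finset.card_univ, nsmul_eq_mul]
  rw [mul_comm 2, mul_assoc, ENNReal.ofReal_mul (by positivity), ENNReal.ofReal_natCast, two_mul]

lemma exists_pairwiseDisjoint_Icc_biUnion_eq (S : Finset (ℝ × ℝ)) :
    ∃ T : Finset (ℝ × ℝ), T.card ≤ S.card ∧
      (T : Set (ℝ × ℝ)).PairwiseDisjoint (fun p => Icc p.1 p.2) ∧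
      ⋃ p ∈ T, Icc p.1 p.2 = ⋃ p ∈ S, Icc p.1 p.2 := by
  classical
  induction hk : S.card using Nat.strong_induction_on generalizing S with
  | _ k ih =>
    by_cases hS : (S : Set (ℝ × ℝ)).PairwiseDisjoint (fun p => Icc p.1 p.2)
    · exact ⟨S, hk.le, hS, rfl⟩
    obtain ⟨p, hp, q, hq, hpq, hpq'⟩ :
        ∃ p ∈ S, ∃ q ∈ S, p ≠ q ∧ ¬Disjoint (Icc p.1 p.2) (Icc q.1 q.2) := by
      simpa [Set.PairwiseDisjoint, Set.Pairwise, Function.onFun] using hS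
    obtain ⟨z, ⟨hzp, hzp'⟩, hzq, hzq'⟩ := not_disjoint_iff.1 hpq'
    have hq' : q ∈ S.erase p := Finset.mem_erase.2 ⟨hpq.symm, hq⟩
    set R := (S.erase p).erase q
    have hcard : (insert (min p.1 q.1, max p.2 q.2) R).card < k := by
      have := Finset.card_insert_le (min p.1 q.1, max p.2 q.2) R
      rw [Finset.card_erase_of_mem hq', Finset.card_erase_of_mem hp] at this
      have : 2 ≤ S.card := (Finset.card_pair hpq).symm.trans_le
        (Finset.card_le_card (Finset.insert_subset hp (Finset.singleton_subset_iff.2 hq)))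
      omega
    obtain ⟨T, hT, hTdisj, hTunion⟩ := ih _ hcard _ rfl
    refine ⟨T, by omega, hTdisj, ?_⟩
    rw [hTunion, ← Finset.insert_erase hp, ← Finset.insert_erase hq', Finset.set_biUnion_insert,
      Finset.set_biUnion_insert, Finset.set_biUnion_insert, ← union_assoc,
      Icc_union_Icc' (hzq.trans hzp') (hzp.trans hzq')]

lemma measure_biUnion_le_measure_biUnion_filter_add {α ι : Type*} [MeasurableSpace α]
    (μ : Measure α) (S : Finset ι) (f : ι → Set α) (c : ℝ≥0∞) :
    μ (⋃ i ∈ S, f i) ≤ μ (⋃ i ∈ S.filter (fun i => c ≤ μ (f i)), f i) + S.card * c := by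
  classical
  set light := S.filter fun i => ¬c ≤ μ (f i)
  have hlight : ∑ i ∈ light, μ (f i) ≤ S.card * c :=
    calc ∑ i ∈ light, μ (f i) ≤ ∑ _i ∈ light, c :=
          Finset.sum_le_sum fun i hi => (not_le.1 (Finset.mem_filter.1 hi).2).le
      _ = light.card * c := by simp
      _ ≤ S.card * c := by gcongr; exact Finset.filter_subset _ S
  calc μ (⋃ i ∈ S, f i)
      = μ ((⋃ i ∈ S.filter (fun i => c ≤ μ (f i)), f i) ∪ ⋃ i ∈ light, f i) := by
        rw [← Finset.set_biUnion_union, Finset.filter_union_filter_not_eq]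
    _ ≤ μ (⋃ i ∈ S.filter (fun i => c ≤ μ (f i)), f i) + ∑ i ∈ light, μ (f i) :=
        (measure_union_le _ _).trans (add_le_add_right (measure_biUnion_finset_le _ _) _)
    _ ≤ _ := add_le_add_right hlight _

lemma exists_disjoint_Icc_subcover (μ : Measure ℝ) {c : ℝ≥0∞} (hc : c ≠ 0) {n : ℕ}
    (u v : Fin n → ℝ) :
    ∃ (k : ℕ) (a b : Fin k → ℝ), k ≤ n ∧ (∀ j, a j ≤ b j) ∧
      (Pairwise fun i j => Disjoint (Icc (a i) (b i)) (Icc (a j) (b j))) ∧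
      μ (⋃ j, Icc (u j) (v j)) ≤ μ (⋃ j, Icc (a j) (b j)) + n * c ∧
      ⋃ j, Icc (a j) (b j) ⊆ ⋃ j, Icc (u j) (v j) ∧
      ∀ j, c ≤ μ (Icc (a j) (b j)) := by
  classical
  set S := Finset.univ.image fun j => (u j, v j)
  obtain ⟨T, hTcard, hTdisj, hTunion⟩ := exists_pairwiseDisjoint_Icc_biUnion_eq S
  have hS : ⋃ j, Icc (u j) (v j) = ⋃ p ∈ T, Icc p.1 p.2 := by simp [hTunion, S]
  have hTn : T.card ≤ n := hTcard.trans (Finset.card_image_le.trans (by simp))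
  set T' := T.filter fun p => c ≤ μ (Icc p.1 p.2)
  set e := T'.equivFin.symm
  have hunion : ⋃ j, Icc (e j).1.1 (e j).1.2 = ⋃ p ∈ T', Icc p.1 p.2 := by
    rw [e.surjective.iUnion_comp fun p : T' => Icc p.1.1 p.1.2, iUnion_subtype]
  have hlarge : ∀ j, c ≤ μ (Icc (e j).1.1 (e j).1.2) := fun j => (Finset.mem_filter.1 (e j).2).2
  refine ⟨T'.card, fun j => (e j).1.1, fun j => (e j).1.2,
    (Finset.card_filter_le _ _).trans hTn, fun j => ?_, fun i j hij => ?_, ?_, ?_, hlarge⟩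
  · by_contra h
    exact hc (le_zero_iff.1 (by simpa [Icc_eq_empty h] using hlarge j))
  · exact hTdisj (Finset.filter_subset _ T (e i).2) (Finset.filter_subset _ T (e j).2)
      fun h => hij (e.injective (Subtype.ext h))
  · rw [hunion, hS]
    refine (measure_biUnion_le_measure_biUnion_filter_add μ T _ c).trans ?_
    gcongr
  · rw [hunion, hS]
    exact biUnion_subset_biUnion_left (Finset.filter_subset _ T)

lemma pos_and_exists_lintegral_enorm_prod_sub_le {μ : Measure ℝ} [SigmaFinite μ] {n : ℕ}
    (hn : n ≠ 0) {ℓ : ℝ} (hℓ : 0 ≤ ℓ)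
    (hint₁ : Integrable (fun t : Fin (n + 1) → ℝ => |vand t|) (Measure.pi fun _ => μ))
    (hint₀ : Integrable (fun t : Fin n → ℝ => |vand t|) (Measure.pi fun _ => μ))
    (heq : ℓ ^ n * ∫ t : Fin n → ℝ, |vand t| ∂(Measure.pi fun _ => μ)
      = ∫ t : Fin (n + 1) → ℝ, |vand t| ∂(Measure.pi fun _ => μ))
    (hμ : ∀ S : Finset ℝ, S.card ≤ n → μ (↑S)ᶜ ≠ 0) :
    0 < ℓ ∧ ∃ s : Fin n → ℝ, ∫⁻ x, ‖∏ j, (s j - x)‖ₑ ∂μ ≤ ENNReal.ofReal (ℓ ^ n) := by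
  have hV : vandLIntegral μ (n + 1) = ENNReal.ofReal (ℓ ^ n) * vandLIntegral μ n := by
    rw [← ofReal_integral_abs_vand hint₁, ← ofReal_integral_abs_vand hint₀, ← heq,
      ENNReal.ofReal_mul (by positivity)]
  have hpos := vandLIntegral_pos hμ (n + 1) le_rfl
  have hV₀ : vandLIntegral μ n ≠ 0 := fun h => hpos.ne' (by simp [hV, h])
  have hV_top : vandLIntegral μ n ≠ ∞ := ofReal_integral_abs_vand hint₀ ▸ ENNReal.ofReal_ne_top
  refine ⟨hℓ.lt_of_ne fun h => hpos.ne' (by simp [hV, ← h, hn]), ?_⟩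
  simpa only [hV, ENNReal.mul_div_cancel_right hV₀ hV_top] using
    exists_lintegral_enorm_prod_sub_le μ hV₀ hV_top

lemma measure_compl_iUnion_Icc_rpow_le {μ : Measure ℝ} {n : ℕ} (hn : n ≠ 0) {s : Fin n → ℝ}
    {ℓ δ : ℝ} (hℓ : 0 < ℓ) (hδ : 0 < δ)
    (hs : ∫⁻ x, ‖∏ j, (s j - x)‖ₑ ∂μ ≤ ENNReal.ofReal (ℓ ^ n)) :
    μ (⋃ j, Icc (s j - δ⁻¹ ^ (n⁻¹ : ℝ) * ℓ) (s j + δ⁻¹ ^ (n⁻¹ : ℝ) * ℓ))ᶜ ≤ ENNReal.ofReal δ := by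
  refine (measure_compl_iUnion_Icc_le μ s (by positivity)).trans ?_
  rw [Fintype.card_fin, mul_pow, Real.rpow_inv_natCast_pow (by positivity) hn]
  calc _ ≤ ENNReal.ofReal (ℓ ^ n) / ENNReal.ofReal (δ⁻¹ * ℓ ^ n) := by gcongr
    _ = ENNReal.ofReal δ := by
      rw [← ENNReal.ofReal_div_of_pos (by positivity)]
      congr 1
      field_simp

lemma ofReal_one_sub_le_of_measure_compl_le {α : Type*} [MeasurableSpace α] {μ : Measure α}
    [IsProbabilityMeasure μ] {U V : Set α} {ε : ℝ} (hε : 0 ≤ ε)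
    (hU : μ Uᶜ ≤ ENNReal.ofReal (ε / 2)) (hUV : μ U ≤ μ V + ENNReal.ofReal (ε / 2)) :
    ENNReal.ofReal (1 - ε) ≤ μ V := by
  rw [ENNReal.ofReal_sub _ hε, ENNReal.ofReal_one, tsub_le_iff_right, ← measure_univ (μ := μ)]
  calc μ univ ≤ μ U + μ Uᶜ := measure_univ_le_add_compl _
    _ ≤ μ V + ENNReal.ofReal (ε / 2) + ENNReal.ofReal (ε / 2) := add_le_add hUV hU
    _ = μ V + ENNReal.ofReal ε := by
        rw [add_assoc, ← ENNReal.ofReal_add (by positivity) (by positivity), add_halves]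

/-- if the probability measure `μ` is not supported on `n` or fewer
points and `ℓ = ℓ_n(μ)` (defined by the Vandermonde ratio), then there are at most
`n` disjoint closed intervals carrying `μ`-mass at least `1 - ε`, of total length
at most `C_{n,ε} ℓ`, each of `μ`-measure at least `ε/(2n)`. -/
theorem statement8 (n : ℕ) (hn : 0 < n) (ε : ℝ) (hε : ε ∈ Set.Ioo (0 : ℝ) 1) :
    ∃ C : ℝ, 0 < C ∧
      ∀ (μ : Measure ℝ), IsProbabilityMeasure μ →
        ∀ ℓ : ℝ, 0 ≤ ℓ →
        Integrable (fun t : Fin (n + 1) → ℝ => |vand t|) (Measure.pi fun _ => μ) →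
        Integrable (fun t : Fin n → ℝ => |vand t|) (Measure.pi fun _ => μ) →
        (ℓ ^ n * ∫ t : Fin n → ℝ, |vand t| ∂(Measure.pi fun _ => μ))
          = (∫ t : Fin (n + 1) → ℝ, |vand t| ∂(Measure.pi fun _ => μ)) →
        (¬ ∃ S : Finset ℝ, S.card ≤ n ∧ μ (↑S)ᶜ = 0) →
        ∃ (k : ℕ) (a b : Fin k → ℝ), k ≤ n ∧ (∀ j, a j ≤ b j) ∧
          (Pairwise fun i j : Fin k => Disjoint (Set.Icc (a i) (b i)) (Set.Icc (a j) (b j))) ∧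
          ENNReal.ofReal (1 - ε) ≤ μ (⋃ j, Set.Icc (a j) (b j)) ∧
          volume (⋃ j, Set.Icc (a j) (b j)) ≤ ENNReal.ofReal (C * ℓ) ∧
          ∀ j, ENNReal.ofReal (ε / (2 * n)) ≤ μ (Set.Icc (a j) (b j)) := by
  obtain ⟨hε₀, -⟩ := hε
  refine ⟨2 * n * (2 / ε) ^ (n⁻¹ : ℝ), by positivity, fun μ _ ℓ hℓ hint₁ hint₀ heq hsupp => ?_⟩
  obtain ⟨hℓ₀, s, hs⟩ := pos_and_exists_lintegral_enorm_prod_sub_le hn.ne' hℓ hint₁ hint₀ heq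
    fun S hS h => hsupp ⟨S, hS, h⟩
  set r := (2 / ε) ^ (n⁻¹ : ℝ) * ℓ
  have hcompl : μ (⋃ j, Icc (s j - r) (s j + r))ᶜ ≤ ENNReal.ofReal (ε / 2) := by
    simpa only [r, inv_div] using
      measure_compl_iUnion_Icc_rpow_le hn.ne' hℓ₀ (half_pos hε₀) hs
  have hc : (n : ℝ≥0∞) * ENNReal.ofReal (ε / (2 * n)) = ENNReal.ofReal (ε / 2) := by
    rw [← ENNReal.ofReal_natCast, ← ENNReal.ofReal_mul (by positivity)]
    congr 1
    field_simp
  obtain ⟨k, a, b, hk, hab, hdisj, hmass, hsub, hlarge⟩ :=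
    exists_disjoint_Icc_subcover μ (c := ENNReal.ofReal (ε / (2 * n)))
      (ENNReal.ofReal_pos.2 (by positivity)).ne' (fun j => s j - r) (fun j => s j + r)
  refine ⟨k, a, b, hk, hab, hdisj,
    ofReal_one_sub_le_of_measure_compl_le hε₀.le hcompl (hc ▸ hmass), ?_, hlarge⟩
  exact (measure_mono hsub).trans
    ((volume_iUnion_Icc_le s r).trans_eq (by simp only [r, Fintype.card_fin, mul_assoc]))
end

section
/- For any λ > 0 and real t_1,…,t_n, the set {s ∈ ℝ : ∏_{i=1}^n |s − t_i| ≤ λ^n} is a closed set with at most n connected components, each of which is a closed interval, and its Lebesgue measure is at most 2nλ. -/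
open MeasureTheory

/-!
Every point of the sublevel set `E` lies within `λ` of some root `t i`, since otherwise each factor
exceeds `λ`; this makes `E` compact and bounds its measure by `2nλ`. Between two consecutive roots
`s ↦ log ∏ |s - t i|` is concave, so there the product has no strict interior local minimum. Hence
every point of `E` is joined to a root by a segment inside `E`, so `E` is the union of the connected
components of the roots, and each of these is a closed interval.
-/

open Set Real

lemma concaveOn_log_sub_Ioi (a : ℝ) : ConcaveOn ℝ (Ioi a) fun x => log (x - a) := by
  have h := strictConcaveOn_log_Ioi.concaveOn.translate_left (-a)
  rwa [show (fun z => -a + z) ⁻¹' Ioi 0 = Ioi a by ext; simp [← sub_eq_neg_add]] at h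

lemma concaveOn_log_sub_Iio (a : ℝ) : ConcaveOn ℝ (Iio a) fun x => log (x - a) := by
  have h := strictConcaveOn_log_Iio.concaveOn.translate_left (-a)
  rwa [show (fun z => -a + z) ⁻¹' Iio 0 = Iio a by ext; simp [← sub_eq_neg_add]] at h

lemma IsClosed.connectedComponentIn {X : Type*} [TopologicalSpace X] {F : Set X}
    (hF : IsClosed F) (x : X) : IsClosed (connectedComponentIn F x) := by
  by_cases hx : x ∈ F
  · refine closure_subset_iff_isClosed.1 ?_
    exact isPreconnected_connectedComponentIn.closure.subset_connectedComponentIn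
      (subset_closure (mem_connectedComponentIn hx))
      (closure_minimal (connectedComponentIn_subset F x) hF)
  · rw [connectedComponentIn_eq_empty hx]
    exact isClosed_empty

lemma IsCompact.exists_eq_iUnion_Icc {ι : Type*} {E : Set ℝ} (hE : IsCompact E) (t : ι → ℝ)
    (ht : ∀ i, t i ∈ E) (hjoin : ∀ s ∈ E, ∃ i, uIcc s (t i) ⊆ E) :
    ∃ a b : ι → ℝ, E = ⋃ i, Icc (a i) (b i) := by
  set C : ι → Set ℝ := fun i => connectedComponentIn E (t i)
  have hC : ∀ i, C i = Icc (sInf (C i)) (sSup (C i)) := fun i =>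
    eq_Icc_of_connected_compact (isConnected_connectedComponentIn_iff.2 (ht i))
      (hE.of_isClosed_subset (hE.isClosed.connectedComponentIn _) (connectedComponentIn_subset _ _))
  refine ⟨fun i => sInf (C i), fun i => sSup (C i), ?_⟩
  simp only [← hC]
  refine Subset.antisymm (fun s hs => ?_) (iUnion_subset fun i => connectedComponentIn_subset _ _)
  obtain ⟨i, hi⟩ := hjoin s hs
  exact mem_iUnion.2 ⟨i, isPreconnected_uIcc.subset_connectedComponentIn right_mem_uIcc hi
    left_mem_uIcc⟩

lemma sub_ne_zero_of_mem_Icc {a v w x : ℝ} (ha : a < v ∨ w < a) (hx : x ∈ Icc v w) :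
    x - a ≠ 0 :=
  sub_ne_zero.2 <| ha.elim (fun ha => (ha.trans_le hx.1).ne') fun ha => (hx.2.trans_lt ha).ne

section ProdAbsSub

variable {ι : Type*} [Fintype ι] (t : ι → ℝ)

lemma prod_abs_sub_self_eq_zero (j : ι) : ∏ i, |t j - t i| = 0 :=
  Finset.prod_eq_zero (Finset.mem_univ j) (by simp)

lemma exists_abs_sub_le_of_prod_abs_sub_le [Nonempty ι] {r s : ℝ} (hr : 0 < r)
    (hs : ∏ i, |s - t i| ≤ r ^ Fintype.card ι) : ∃ i, |s - t i| ≤ r := by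
  by_contra! h
  have := Finset.prod_lt_prod_of_nonempty (fun _ _ => hr) (fun i _ => h i) Finset.univ_nonempty
  rw [Finset.prod_const, Finset.card_univ] at this
  linarith

lemma prod_abs_sub_le_of_forall_mem_uIcc {s x : ℝ} (h : ∀ i, x ∈ uIcc s (t i)) :
    ∏ i, |x - t i| ≤ ∏ i, |s - t i| :=
  Finset.prod_le_prod (fun _ _ => abs_nonneg _) fun i _ => by
    simpa only [abs_sub_comm] using abs_sub_right_of_mem_uIcc (h i)

lemma concaveOn_log_prod_abs_sub {v w : ℝ} (h : ∀ i, t i < v ∨ w < t i) :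
    ConcaveOn ℝ (Icc v w) fun x => log (∏ i, |x - t i|) := by
  have hsum : ConcaveOn ℝ (Icc v w) (∑ i, fun x => log (x - t i)) :=
    Finset.sum_induction _ (ConcaveOn ℝ (Icc v w)) (fun _ _ => ConcaveOn.add)
      (concaveOn_const 0 (convex_Icc v w)) fun i _ => by
        rcases h i with hi | hi
        · exact (concaveOn_log_sub_Ioi (t i)).subset
            (fun x hx => lt_of_lt_of_le hi hx.1) (convex_Icc v w)
        · exact (concaveOn_log_sub_Iio (t i)).subset
            (fun x hx => lt_of_le_of_lt hx.2 hi) (convex_Icc v w)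
  refine hsum.congr fun x hx => ?_
  simp only [Finset.sum_apply, log_abs,
    log_prod fun i _ => abs_ne_zero.2 (sub_ne_zero_of_mem_Icc (h i) hx)]

lemma min_le_prod_abs_sub {v w x : ℝ} (h : ∀ i, t i < v ∨ w < t i) (hx : x ∈ Icc v w) :
    min (∏ i, |v - t i|) (∏ i, |w - t i|) ≤ ∏ i, |x - t i| := by
  have hpos : ∀ y ∈ Icc v w, 0 < ∏ i, |y - t i| := fun y hy =>
    Finset.prod_pos fun i _ => abs_pos.2 (sub_ne_zero_of_mem_Icc (h i) hy)
  have hv : v ∈ Icc v w := ⟨le_rfl, hx.1.trans hx.2⟩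
  have hw : w ∈ Icc v w := ⟨hx.1.trans hx.2, le_rfl⟩
  have hlog := (concaveOn_log_prod_abs_sub t h).min_le_of_mem_Icc hv hw hx
  rwa [← exp_le_exp, exp_monotone.map_min, exp_log (hpos x hx), exp_log (hpos v hv),
    exp_log (hpos w hw)] at hlog

lemma uIcc_subset_sublevel_or_of_mem_Ioo {c s : ℝ} {j₁ j₂ : ι}
    (hs : ∏ i, |s - t i| ≤ c) (hsj : s ∈ Ioo (t j₁) (t j₂)) (h : ∀ i, t i ∉ Ioo (t j₁) (t j₂)) :
    uIcc s (t j₁) ⊆ {x | ∏ i, |x - t i| ≤ c} ∨ uIcc s (t j₂) ⊆ {x | ∏ i, |x - t i| ≤ c} := by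
  have hc : 0 ≤ c := (Finset.prod_nonneg fun _ _ => abs_nonneg _).trans hs
  by_contra! hnot
  obtain ⟨v, hv, hvc⟩ := not_subset.1 hnot.1
  obtain ⟨w, hw, hwc⟩ := not_subset.1 hnot.2
  simp only [notMem_ofPred_iff, not_le] at hvc hwc
  rw [uIcc_of_ge hsj.1.le] at hv
  rw [uIcc_of_le hsj.2.le] at hw
  have hv₁ : t j₁ < v := hv.1.lt_of_ne <| by
    rintro rfl
    linarith [prod_abs_sub_self_eq_zero t j₁]
  have hw₂ : w < t j₂ := hw.2.lt_of_ne <| by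
    rintro rfl
    linarith [prod_abs_sub_self_eq_zero t j₂]
  have hroots : ∀ i, t i < v ∨ w < t i := fun i => by
    by_contra! hi
    exact h i ⟨hv₁.trans_le hi.1, hi.2.trans_lt hw₂⟩
  have := min_le_prod_abs_sub t hroots ⟨hv.2, hw.1⟩
  exact (this.trans hs).not_gt (lt_min hvc hwc)

lemma exists_uIcc_subset_sublevel [Nonempty ι] {c s : ℝ} (hs : ∏ i, |s - t i| ≤ c) :
    ∃ i, uIcc s (t i) ⊆ {x | ∏ i, |x - t i| ≤ c} := by
  by_cases hroot : ∃ i, t i = s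
  · obtain ⟨i, rfl⟩ := hroot
    exact ⟨i, by simpa using hs⟩
  push Not at hroot
  have hnearest : ∀ j, (∀ i, t j ∈ uIcc s (t i)) → uIcc s (t j) ⊆ {x | ∏ i, |x - t i| ≤ c} :=
    fun j hj x hx => (prod_abs_sub_le_of_forall_mem_uIcc t fun i =>
      uIcc_subset_uIcc left_mem_uIcc (hj i) hx).trans hs
  by_cases hleft : ∃ i, t i < s
  swap
  · push Not at hleft
    obtain ⟨j, -, hj⟩ := Finset.exists_min_image Finset.univ t Finset.univ_nonempty
    exact ⟨j, hnearest j fun i => mem_uIcc.2 (Or.inl ⟨hleft j, hj i (Finset.mem_univ i)⟩)⟩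
  by_cases hright : ∃ i, s < t i
  swap
  · push Not at hright
    obtain ⟨j, -, hj⟩ := Finset.exists_max_image Finset.univ t Finset.univ_nonempty
    exact ⟨j, hnearest j fun i => mem_uIcc.2 (Or.inr ⟨hj i (Finset.mem_univ i), hright j⟩)⟩
  obtain ⟨j₁, hj₁, hj₁max⟩ := Finset.exists_max_image (Finset.univ.filter fun i => t i < s) t
    (by simpa [Finset.filter_nonempty_iff] using hleft)
  obtain ⟨j₂, hj₂, hj₂min⟩ := Finset.exists_min_image (Finset.univ.filter fun i => s < t i) t
    (by simpa [Finset.filter_nonempty_iff] using hright)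
  simp only [Finset.mem_filter, Finset.mem_univ, true_and] at hj₁ hj₂ hj₁max hj₂min
  have hgap : ∀ i, t i ∉ Ioo (t j₁) (t j₂) := fun i hi => by
    rcases lt_trichotomy (t i) s with h | h | h
    · exact (hj₁max i h).not_gt hi.1
    · exact hroot i h
    · exact (hj₂min i h).not_gt hi.2
  rcases uIcc_subset_sublevel_or_of_mem_Ioo t hs ⟨hj₁, hj₂⟩ hgap with h | h
  exacts [⟨j₁, h⟩, ⟨j₂, h⟩]

end ProdAbsSub

/-- for `λ > 0` and reals `t_1,…,t_n`, the sublevel set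
`{s : ∏ |s - t_i| ≤ λ^n}` is closed, is a union of at most `n` closed intervals,
and has Lebesgue measure at most `2nλ`. -/
theorem statement10 (n : ℕ) (hn : 0 < n) (lam : ℝ) (hlam : 0 < lam) (t : Fin n → ℝ) :
    IsClosed {s : ℝ | (∏ i, |s - t i|) ≤ lam ^ n} ∧
    (∃ a b : Fin n → ℝ,
      {s : ℝ | (∏ i, |s - t i|) ≤ lam ^ n} = ⋃ i, Set.Icc (a i) (b i)) ∧
    volume {s : ℝ | (∏ i, |s - t i|) ≤ lam ^ n} ≤ ENNReal.ofReal (2 * n * lam) := by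
  set E := {s : ℝ | (∏ i, |s - t i|) ≤ lam ^ n}
  have : Nonempty (Fin n) := ⟨⟨0, hn⟩⟩
  have hclosed : IsClosed E := isClosed_le (by fun_prop) continuous_const
  have hcover : E ⊆ ⋃ i, Metric.closedBall (t i) lam := fun s hs => by
    obtain ⟨i, hi⟩ := exists_abs_sub_le_of_prod_abs_sub_le t hlam (by rwa [Fintype.card_fin])
    exact mem_iUnion.2 ⟨i, hi⟩
  have hcompact : IsCompact E :=
    (isCompact_iUnion fun i => isCompact_closedBall (t i) lam).of_isClosed_subset hclosed hcover
  have hroots : ∀ i, t i ∈ E := fun i => by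
    show ∏ j, |t i - t j| ≤ lam ^ n
    rw [prod_abs_sub_self_eq_zero]
    positivity
  refine ⟨hclosed, hcompact.exists_eq_iUnion_Icc t hroots fun s hs =>
    exists_uIcc_subset_sublevel t hs, ?_⟩
  calc volume E ≤ volume (⋃ i, Metric.closedBall (t i) lam) := measure_mono hcover
    _ ≤ ∑ i, volume (Metric.closedBall (t i) lam) := measure_iUnion_fintype_le _ _
    _ = ENNReal.ofReal (2 * n * lam) := by
      simp only [Real.volume_closedBall, Finset.sum_const, Finset.card_univ, Fintype.card_fin,
        nsmul_eq_mul]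
      rw [← ENNReal.ofReal_natCast, ← ENNReal.ofReal_mul (by positivity)]
      ring_nf
end

section
/- Let t_1 < ⋯ < t_{n+1} be distinct points, let k be an index maximizing V_n(t_1,…,t̂_k,…,t_{n+1}) over k ∈ {1,…,n+1}. Then k ≠ 1 and k ≠ n+1. -/
/-! Omitting `t₁` instead of `t₀` turns each gap `t_j - t₁` (`j ≥ 2`; there is one since `n ≥ 2`)
into the larger `t_j - t₀` and leaves all other gaps unchanged, so the Vandermonde product strictly
grows. The reflection `t ↦ -t ∘ rev` preserves Vandermonde products and exchanges the two ends,
which handles the last point. -/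

lemma vand_lt_vand {m : ℕ} {s u : Fin m → ℝ} (hs : StrictMono s)
    (hle : ∀ i j, i < j → s j - s i ≤ u j - u i) {i j : Fin m} (hij : i < j)
    (hlt : s j - s i < u j - u i) : vand s < vand u :=
  Finset.prod_lt_prod (fun p hp => sub_pos.2 (hs (Finset.mem_filter.1 hp).2))
    (fun p hp => hle _ _ (Finset.mem_filter.1 hp).2) ⟨(i, j), by simpa using hij, hlt⟩

lemma vand_neg_rev {m : ℕ} (t : Fin m → ℝ) : vand (fun i => -t i.rev) = vand t :=
  Finset.prod_nbij' (fun p => (p.2.rev, p.1.rev)) (fun p => (p.2.rev, p.1.rev))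
    (by simp [Fin.rev_lt_rev]) (by simp [Fin.rev_lt_rev]) (by simp) (by simp)
    (by simp [neg_add_eq_sub])

lemma vandOmit_neg_rev {m : ℕ} (t : Fin (m + 1) → ℝ) (k : Fin (m + 1)) :
    vandOmit (fun i => -t i.rev) k = vandOmit t k.rev := by
  rw [vandOmit, vandOmit, ← vand_neg_rev (t ∘ k.rev.succAbove)]
  simp [Function.comp_def, Fin.rev_succAbove]

lemma vandOmit_zero_lt_vandOmit_one {m : ℕ} {t : Fin (m + 3) → ℝ} (ht : StrictMono t) :
    vandOmit t 0 < vandOmit t 1 := by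
  have h_one_le_succ : ∀ i, t ((1 : Fin (m + 3)).succAbove i) ≤ t i.succ := by
    intro i
    cases i using Fin.cases with
    | zero => exact ht.monotone (by simp)
    | succ i => simp
  refine vand_lt_vand (i := 0) (j := 1) (ht.comp (Fin.strictMono_succAbove 0)) ?_ (by simp) ?_
  · intro i j hij
    cases j using Fin.cases with
    | zero => exact absurd hij (Fin.not_lt_zero i)
    | succ j => simpa using sub_le_sub_left (h_one_le_succ i) (t j.succ.succ)
  · simpa using ht (show (0 : Fin (m + 3)) < 1 by simp)

/-- if `k` maximizes `V_n(t_1,…,t̂_k,…,t_{n+1})` for increasing points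
`t_1 < ⋯ < t_{n+1}`, then `k` is neither the first nor the last index. -/
theorem statement12 (n : ℕ) (hn : 2 ≤ n) (t : Fin (n + 1) → ℝ) (ht : StrictMono t)
    (k : Fin (n + 1)) (hk : ∀ i, vandOmit t i ≤ vandOmit t k) :
    k ≠ 0 ∧ k ≠ Fin.last n := by
  obtain ⟨m, rfl⟩ : ∃ m, n = m + 2 := ⟨n - 2, by omega⟩
  constructor
  · rintro rfl
    exact (hk 1).not_gt (vandOmit_zero_lt_vandOmit_one ht)
  · rintro rfl
    have hrev : StrictMono fun i : Fin (m + 3) => -t i.rev :=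
      (ht.comp_strictAnti Fin.rev_strictAnti).neg
    have h := vandOmit_zero_lt_vandOmit_one hrev
    rw [vandOmit_neg_rev, vandOmit_neg_rev, Fin.rev_zero] at h
    exact (hk _).not_gt h
end

section
/- Let t_1 < ⋯ < t_{n+1}, let k ∈ {2,…,n} and let I' be the shorter of the intervals [t_{k−1}, t_k] and [t_k, t_{k+1}]. Then for every t ∈ I' and every pair of distinct indices j, i with i ≠ k, j ≠ k, the product ∏_{i ≠ j,k} |t − t_i| ≤ 2^{n−1} ∏_{i ≠ j,k} |t_k − t_i|. -/
/-!
Every remaining node `t i` is at least as far from `t k` as the nearer neighbour of `t k`,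
while a point `x` of the shorter adjacent interval is at most that close to `t k`. Hence
`|x - t i| ≤ |x - t k| + |t k - t i| ≤ 2 |t k - t i|` factor by factor, and there are
`n - 1` factors.
-/

open Finset

section OrderedField

variable {α : Type*} [Field α] [LinearOrder α] [IsStrictOrderedRing α]

def shorterIcc (a b c : α) : Set α :=
  if b - a ≤ c - b then Set.Icc a b else Set.Icc b c

theorem abs_sub_le_min_of_mem_shorterIcc {a b c x : α} (hx : x ∈ shorterIcc a b c) :
    |x - b| ≤ min (b - a) (c - b) := by
  unfold shorterIcc at hx
  split_ifs at hx with h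
  · obtain ⟨hax, hxb⟩ := hx
    rw [abs_sub_comm, abs_of_nonneg (by linarith)]
    exact le_min (by linarith) (by linarith)
  · obtain ⟨hbx, hxc⟩ := hx
    rw [abs_of_nonneg (by linarith)]
    exact le_min (by linarith) (by linarith)

theorem abs_sub_le_two_mul_abs_sub {x a b : α} (h : |x - a| ≤ |a - b|) :
    |x - b| ≤ 2 * |a - b| :=
  calc |x - b| ≤ |x - a| + |a - b| := abs_sub_le x a b
    _ ≤ 2 * |a - b| := by linarith

theorem prod_abs_sub_le_two_pow_mul {ι : Type*} (s : Finset ι) (f : ι → α) {x a : α}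
    (h : ∀ i ∈ s, |x - a| ≤ |a - f i|) :
    ∏ i ∈ s, |x - f i| ≤ 2 ^ #s * ∏ i ∈ s, |a - f i| :=
  calc ∏ i ∈ s, |x - f i| ≤ ∏ i ∈ s, 2 * |a - f i| :=
        prod_le_prod (fun _ _ ↦ abs_nonneg _) fun i hi ↦ abs_sub_le_two_mul_abs_sub (h i hi)
    _ = 2 ^ #s * ∏ i ∈ s, |a - f i| := by rw [prod_mul_distrib, prod_const]

theorem min_gap_le_abs_sub {t : ℕ → α} {n k i : ℕ} (ht : MonotoneOn t (Set.Iic n))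
    (hk : k ≤ n) (hi : i ≤ n) (hik : i ≠ k) :
    min (t k - t (k - 1)) (t (k + 1) - t k) ≤ |t k - t i| := by
  rcases hik.lt_or_gt with hlt | hgt
  · have : t i ≤ t (k - 1) := ht (Set.mem_Iic.2 hi) (Set.mem_Iic.2 (by omega)) (by omega)
    exact (min_le_left _ _).trans (by linarith [le_abs_self (t k - t i)])
  · have : t (k + 1) ≤ t i := ht (Set.mem_Iic.2 (by omega)) (Set.mem_Iic.2 hi) hgt
    exact (min_le_right _ _).trans (by linarith [neg_abs_le (t k - t i)])

end OrderedField

theorem statement13_general (n : ℕ) (t : ℕ → ℝ) (hmono : ∀ i < n, t i < t (i + 1))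
    (k : ℕ) (hk2 : k < n) :
    ∀ x ∈ (if t k - t (k - 1) ≤ t (k + 1) - t k then Set.Icc (t (k - 1)) (t k)
           else Set.Icc (t k) (t (k + 1))),
      ∀ j ≤ n, j ≠ k →
        (∏ i ∈ ((Finset.range (n + 1)).erase j).erase k, |x - t i|) ≤
          2 ^ (n - 1) * ∏ i ∈ ((Finset.range (n + 1)).erase j).erase k, |t k - t i| := by
  intro x hx j hj hjk
  have ht : MonotoneOn t (Set.Iic n) :=
    (strictMonoOn_Iic_of_lt_succ fun m hm ↦ hmono m hm).monotoneOn
  have hcard : #(((range (n + 1)).erase j).erase k) = n - 1 := by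
    rw [card_erase_of_mem (by simp only [mem_erase, mem_range]; omega), card_erase_of_mem (by simpa using hj), card_range]
    omega
  rw [← hcard]
  refine prod_abs_sub_le_two_pow_mul _ _ fun i hi ↦ ?_
  simp only [mem_erase, mem_range] at hi
  exact (abs_sub_le_min_of_mem_shorterIcc hx).trans
    (min_gap_le_abs_sub ht hk2.le (by omega) hi.1)

/-- for increasing points `t 0 < ⋯ < t n` (so `n+1` points), an
interior index `k` (`1 ≤ k`, `k < n`), and `I'` the shorter of `[t (k-1), t k]` and
`[t k, t (k+1)]`, one has for every `x ∈ I'` and every index `j ≠ k` of the list: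
`∏_{i ≠ j,k} |x - t i| ≤ 2^{n-1} ∏_{i ≠ j,k} |t k - t i|`. -/
theorem statement13 (n : ℕ) (t : ℕ → ℝ) (hmono : ∀ i < n, t i < t (i + 1))
    (k : ℕ) (hk1 : 1 ≤ k) (hk2 : k < n) :
    ∀ x ∈ (if t k - t (k - 1) ≤ t (k + 1) - t k then Set.Icc (t (k - 1)) (t k)
           else Set.Icc (t k) (t (k + 1))),
      ∀ j ≤ n, j ≠ k →
        (∏ i ∈ ((Finset.range (n + 1)).erase j).erase k, |x - t i|) ≤
          2 ^ (n - 1) * ∏ i ∈ ((Finset.range (n + 1)).erase j).erase k, |t k - t i| :=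
  statement13_general n t hmono k hk2
end

section
/- Let I' be a compact interval, ℓ > 0, n ≥ 1, and f ∈ C^n(I'). Then for every j ∈ {0,…,n}, min{|I'|^j, ℓ^j} · sup_{t ∈ I'} |f^{(j)}(t)| ≤ C_n · ( sup_{t ∈ I'} |f(t)| + ℓ^n · sup_{t ∈ I'} |f^{(n)}(t)| ), where C_n depends only on n. -/
/-!
Work on a window `[c, c + s] ⊆ (a, b)` with `s = min (b - a) ℓ / 2`. The `k`-th forward
difference of `f` with step `s / k` is at most `2 ^ k sup |f|`, and by repeated use of the mean
value theorem it equals `(s / k) ^ k f⁽ᵏ⁾(ξ)` for some `ξ` in the window, so `f⁽ᵏ⁾` is controlled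
at one point. The mean value theorem for `f⁽ᵏ⁾` spreads this to the whole window at the cost of
`s sup |f⁽ᵏ⁺¹⁾|`, and downward induction from `k = n` gives
`s ^ k |f⁽ᵏ⁾| ≤ (n - k) (2n) ^ n sup |f| + s ^ n sup |f⁽ⁿ⁾|`.
Every interior point lies in such a window; the endpoints follow by continuity.
-/

open Set
open scoped fwdDiff

section IteratedDeriv

variable {𝕜 F : Type*} [NontriviallyNormedField 𝕜] [NormedAddCommGroup F] [NormedSpace 𝕜 F]
  {f : 𝕜 → F} {x : 𝕜} {k : ℕ}

theorem ContDiffAt.hasDerivAt_iteratedDeriv (hf : ContDiffAt 𝕜 (k + 1) f x) :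
    HasDerivAt (iteratedDeriv k f) (iteratedDeriv (k + 1) f x) x := by
  rw [iteratedDeriv_succ, iteratedDeriv_eq_equiv_comp]
  exact ((ContinuousMultilinearMap.piFieldEquiv 𝕜 (Fin k) F).symm.differentiableAt.comp x
    (hf.differentiableAt_iteratedFDeriv (by exact_mod_cast k.lt_succ_self))).hasDerivAt

theorem iteratedDeriv_fwdDiff {h : 𝕜} (hx : ContDiffAt 𝕜 k f x)
    (hxh : ContDiffAt 𝕜 k f (x + h)) :
    iteratedDeriv k (Δ_[h] f) x = Δ_[h] (iteratedDeriv k f) x := by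
  have hshift : ContDiffAt 𝕜 k (fun z ↦ f (z + h)) x :=
    hxh.comp x (contDiffAt_id.add contDiffAt_const)
  unfold fwdDiff
  rw [iteratedDeriv_fun_sub hshift hx, iteratedDeriv_comp_add_const]

end IteratedDeriv

theorem norm_fwdDiff_iter_le {E : Type*} [SeminormedAddCommGroup E] {h : ℝ} (hh : 0 ≤ h)
    (k : ℕ) {f : ℝ → E} {y M : ℝ} (hf : ∀ u ∈ Icc y (y + k * h), ‖f u‖ ≤ M) :
    ‖(Δ_[h])^[k] f y‖ ≤ 2 ^ k * M := by
  induction k generalizing f M with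
  | zero => simpa using hf y (by simp)
  | succ k ih =>
    have hΔ : ∀ u ∈ Icc y (y + k * h), ‖Δ_[h] f u‖ ≤ 2 * M := by
      intro u ⟨hyu, huk⟩
      have h1 := hf u ⟨hyu, by push_cast; nlinarith⟩
      have h2 := hf (u + h) ⟨by linarith, by push_cast; linarith⟩
      calc ‖f (u + h) - f u‖ ≤ ‖f (u + h)‖ + ‖f u‖ := norm_sub_le _ _
        _ ≤ 2 * M := by linarith
    rw [Function.iterate_succ_apply, pow_succ, mul_assoc]
    exact ih hΔ

theorem exists_fwdDiff_iter_eq_pow_mul_iteratedDeriv {h : ℝ} (hh : 0 < h) (k : ℕ) {f : ℝ → ℝ}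
    {y : ℝ} (hf : ∀ u ∈ Icc y (y + k * h), ContDiffAt ℝ k f u) :
    ∃ ξ ∈ Icc y (y + k * h), (Δ_[h])^[k] f y = h ^ k * iteratedDeriv k f ξ := by
  induction k generalizing f with
  | zero => exact ⟨y, by simp, by simp⟩
  | succ k ih =>
    have hwin : ∀ u ∈ Icc y (y + k * h), u ∈ Icc y (y + (k + 1 : ℕ) * h) ∧
        u + h ∈ Icc y (y + (k + 1 : ℕ) * h) := fun u ⟨hyu, huk⟩ ↦
      ⟨⟨hyu, by push_cast; linarith⟩, ⟨by linarith, by push_cast; linarith⟩⟩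
    have hf' : ∀ u ∈ Icc y (y + (k + 1 : ℕ) * h), ContDiffAt ℝ (k + 1) f u := by
      exact_mod_cast hf
    have hΔf : ∀ u ∈ Icc y (y + k * h), ContDiffAt ℝ k (Δ_[h] f) u := fun u hu ↦
      (((hf' _ (hwin u hu).2).comp u (contDiffAt_id.add contDiffAt_const)).sub
        (hf' u (hwin u hu).1)).of_le (by exact_mod_cast k.le_succ)
    obtain ⟨ξ, hξ, hΔ⟩ := ih hΔf
    have hderiv : ∀ u ∈ Icc ξ (ξ + h),
        HasDerivAt (iteratedDeriv k f) (iteratedDeriv (k + 1) f u) u := fun u ⟨h1, h2⟩ ↦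
      (hf' u ⟨by linarith [hξ.1], by push_cast; linarith [hξ.2]⟩).hasDerivAt_iteratedDeriv
    obtain ⟨ζ, hζ, hslope⟩ := exists_hasDerivAt_eq_slope (iteratedDeriv k f)
      (iteratedDeriv (k + 1) f) (by linarith : ξ < ξ + h)
      (fun u hu ↦ (hderiv u hu).continuousAt.continuousWithinAt)
      (fun u hu ↦ hderiv u (Ioo_subset_Icc_self hu))
    have hincrement : Δ_[h] (iteratedDeriv k f) ξ = h * iteratedDeriv (k + 1) f ζ := by
      rw [hslope, fwdDiff, add_sub_cancel_left]
      field_simp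
    refine ⟨ζ, ⟨by linarith [hξ.1, hζ.1], by push_cast; linarith [hξ.2, hζ.2]⟩, ?_⟩
    rw [Function.iterate_succ_apply, hΔ, iteratedDeriv_fwdDiff
      ((hf' ξ (hwin ξ hξ).1).of_le (by exact_mod_cast k.le_succ))
      ((hf' _ (hwin ξ hξ).2).of_le (by exact_mod_cast k.le_succ)), hincrement]
    ring

theorem exists_pow_mul_abs_iteratedDeriv_le {k : ℕ} {f : ℝ → ℝ} {c s M : ℝ} (hs : 0 < s)
    (hf : ∀ u ∈ Icc c (c + s), ContDiffAt ℝ k f u) (hM : ∀ u ∈ Icc c (c + s), |f u| ≤ M) :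
    ∃ ξ ∈ Icc c (c + s), s ^ k * |iteratedDeriv k f ξ| ≤ (2 * k) ^ k * M := by
  rcases k.eq_zero_or_pos with rfl | hk
  · exact ⟨c, left_mem_Icc.2 (by linarith), by simpa using hM c (left_mem_Icc.2 (by linarith))⟩
  have hstep : (k : ℝ) * (s / k) = s := mul_div_cancel₀ s (by positivity)
  rw [← hstep] at hf hM ⊢
  obtain ⟨ξ, hξ, hΔ⟩ := exists_fwdDiff_iter_eq_pow_mul_iteratedDeriv (by positivity) k hf
  refine ⟨ξ, hξ, ?_⟩
  have hbound := norm_fwdDiff_iter_le (h := s / k) (f := f) (by positivity) k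
    (by simpa only [Real.norm_eq_abs] using hM)
  rw [hΔ, Real.norm_eq_abs, abs_mul, abs_of_pos (by positivity)] at hbound
  calc (k * (s / k)) ^ k * |iteratedDeriv k f ξ|
      = k ^ k * ((s / k) ^ k * |iteratedDeriv k f ξ|) := by ring
    _ ≤ k ^ k * (2 ^ k * M) := by gcongr
    _ = (2 * k) ^ k * M := by ring

theorem pow_mul_abs_iteratedDeriv_le_on_Icc {n : ℕ} {f : ℝ → ℝ} {c s M₀ Mₙ : ℝ} (hs : 0 < s)
    (hf : ∀ u ∈ Icc c (c + s), ContDiffAt ℝ n f u) (h₀ : ∀ u ∈ Icc c (c + s), |f u| ≤ M₀)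
    (hₙ : ∀ u ∈ Icc c (c + s), |iteratedDeriv n f u| ≤ Mₙ) {j : ℕ} (hj : j ≤ n) :
    ∀ t ∈ Icc c (c + s),
      s ^ j * |iteratedDeriv j f t| ≤ (n - j) * ((2 * n) ^ n * M₀) + s ^ n * Mₙ := by
  induction hj using Nat.decreasingInduction with
  | self => intro t ht; simpa using mul_le_mul_of_nonneg_left (hₙ t ht) (by positivity)
  | of_succ j hjn ih =>
    intro t ht
    set R := (n - (j + 1 : ℕ)) * ((2 * n) ^ n * M₀) + s ^ n * Mₙ
    have hM₀ : 0 ≤ M₀ := (abs_nonneg _).trans (h₀ c (left_mem_Icc.2 (by linarith)))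
    obtain ⟨ξ, hξ, hξbound⟩ := exists_pow_mul_abs_iteratedDeriv_le hs
      (fun u hu ↦ (hf u hu).of_le (by exact_mod_cast hjn.le)) h₀
    have hderiv : ∀ u ∈ Icc c (c + s),
        HasDerivAt (iteratedDeriv j f) (iteratedDeriv (j + 1) f u) u := fun u hu ↦
      ((hf u hu).of_le (by exact_mod_cast hjn)).hasDerivAt_iteratedDeriv
    have hmvt : |iteratedDeriv j f t - iteratedDeriv j f ξ| ≤ R / s ^ (j + 1) * |t - ξ| := by
      refine (convex_Icc c (c + s)).norm_image_sub_le_of_norm_deriv_le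
        (fun u hu ↦ (hderiv u hu).differentiableAt) (fun u hu ↦ ?_) hξ ht
      rw [(hderiv u hu).deriv, Real.norm_eq_abs, le_div_iff₀' (by positivity)]
      exact ih u hu
    have hR : 0 ≤ R := le_trans (by positivity) (ih t ht)
    have hdist : |t - ξ| ≤ s :=
      abs_sub_le_iff.2 ⟨by linarith [ht.2, hξ.1], by linarith [ht.1, hξ.2]⟩
    have hpow : (2 * j : ℝ) ^ j * M₀ ≤ (2 * n) ^ n * M₀ := by
      have h1 : (1 : ℝ) ≤ 2 * n := by
        have : (1 : ℝ) ≤ n := by exact_mod_cast hjn.pos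
        linarith
      gcongr
      calc (2 * j : ℝ) ^ j ≤ (2 * n) ^ j := by gcongr
        _ ≤ (2 * n) ^ n := pow_le_pow_right₀ h1 hjn.le
    calc s ^ j * |iteratedDeriv j f t|
        ≤ s ^ j * (|iteratedDeriv j f ξ| + R / s ^ (j + 1) * s) := by
          gcongr
          calc |iteratedDeriv j f t|
              ≤ |iteratedDeriv j f ξ| + |iteratedDeriv j f t - iteratedDeriv j f ξ| := by
                linarith [abs_sub_abs_le_abs_sub (iteratedDeriv j f t) (iteratedDeriv j f ξ)]
            _ ≤ _ := by gcongr; exact hmvt.trans (by gcongr)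
      _ = s ^ j * |iteratedDeriv j f ξ| + R := by field_simp; ring
      _ ≤ (n - j) * ((2 * n) ^ n * M₀) + s ^ n * Mₙ := by simp only [R]; push_cast; linarith

theorem exists_Icc_subset_Ioo_mem {a b y s : ℝ} (hy : y ∈ Ioo a b) (hs : 0 < s)
    (hsab : s < b - a) :
    ∃ c, Icc c (c + s) ⊆ Ioo a b ∧ y ∈ Icc c (c + s) := by
  -- The homothety of ratio `θ` centred at `y` maps `[a, b]` onto a window of length `s`.
  set θ := s / (b - a)
  have hθ : θ < 1 := (div_lt_one (by linarith)).2 hsab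
  have hθs : θ * (b - a) = s := div_mul_cancel₀ s (by linarith)
  have hθ0 : 0 < θ := div_pos hs (by linarith)
  refine ⟨y - θ * (y - a), fun u hu ↦ ⟨?_, ?_⟩, ?_, ?_⟩
  · nlinarith [hu.1, hy.1]
  · nlinarith [hu.2, hy.2]
  · nlinarith [hy.1]
  · nlinarith [hy.2]

def interpolationConst (n : ℕ) : ℝ := 2 ^ n * (n * (2 * n) ^ n + 1)

theorem min_pow_mul_abs_iteratedDeriv_le {n : ℕ} {f : ℝ → ℝ} {a b ℓ M₀ Mₙ : ℝ} (hab : a < b)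
    (hℓ : 0 < ℓ) (hf : ∀ u ∈ Ioo a b, ContDiffAt ℝ n f u) (h₀ : ∀ u ∈ Ioo a b, |f u| ≤ M₀)
    (hₙ : ∀ u ∈ Ioo a b, |iteratedDeriv n f u| ≤ Mₙ) {j : ℕ} (hj : j ≤ n) {y : ℝ}
    (hy : y ∈ Ioo a b) :
    min ((b - a) ^ j) (ℓ ^ j) * |iteratedDeriv j f y| ≤
      interpolationConst n * (M₀ + ℓ ^ n * Mₙ) := by
  set q := min (b - a) ℓ
  have hq : 0 < q := lt_min (by linarith) hℓ
  obtain ⟨c, hsub, hyc⟩ := exists_Icc_subset_Ioo_mem hy (half_pos hq)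
    (by linarith [min_le_left (b - a) ℓ])
  have hM₀ : 0 ≤ M₀ := (abs_nonneg _).trans (h₀ y hy)
  have hMₙ : 0 ≤ Mₙ := (abs_nonneg _).trans (hₙ y hy)
  have hwindow := pow_mul_abs_iteratedDeriv_le_on_Icc (half_pos hq) (fun u hu ↦ hf u (hsub hu))
    (fun u hu ↦ h₀ u (hsub hu)) (fun u hu ↦ hₙ u (hsub hu)) hj y hyc
  have hmin : min ((b - a) ^ j) (ℓ ^ j) ≤ q ^ j := by
    rcases min_choice (b - a) ℓ with h | h <;> rw [show q = _ from h]
    exacts [min_le_left _ _, min_le_right _ _]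
  have hnj : (n - j : ℝ) ≤ n := by linarith [(Nat.cast_nonneg j : (0 : ℝ) ≤ j)]
  have hs : (q / 2) ^ n ≤ ℓ ^ n := by gcongr; linarith [min_le_right (b - a) ℓ]
  calc min ((b - a) ^ j) (ℓ ^ j) * |iteratedDeriv j f y|
      ≤ 2 ^ j * ((q / 2) ^ j * |iteratedDeriv j f y|) := by
        rw [← mul_assoc, ← mul_pow, mul_div_cancel₀ q two_ne_zero]; gcongr
    _ ≤ 2 ^ n * ((q / 2) ^ j * |iteratedDeriv j f y|) := by gcongr; exact one_le_two
    _ ≤ 2 ^ n * (n * ((2 * n) ^ n * M₀) + ℓ ^ n * Mₙ) := by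
        gcongr; exact hwindow.trans (by gcongr)
    _ ≤ interpolationConst n * (M₀ + ℓ ^ n * Mₙ) := by
        rw [interpolationConst, mul_assoc]
        gcongr
        nlinarith [mul_nonneg (by positivity : (0 : ℝ) ≤ n * (2 * n) ^ n)
          (by positivity : 0 ≤ ℓ ^ n * Mₙ)]

theorem statement15_general (n : ℕ) :
    ∃ C : ℝ, 0 < C ∧
      ∀ a b : ℝ, a < b → ∀ ℓ : ℝ, 0 < ℓ →
        ∀ f : ℝ → ℝ, ContDiffOn ℝ n f (Set.Icc a b) →
          ∀ M₀ Mₙ : ℝ,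
            (∀ x ∈ Set.Icc a b, |f x| ≤ M₀) →
            (∀ x ∈ Set.Icc a b, |iteratedDerivWithin n f (Set.Icc a b) x| ≤ Mₙ) →
            ∀ j ≤ n, ∀ x ∈ Set.Icc a b,
              min ((b - a) ^ j) (ℓ ^ j) * |iteratedDerivWithin j f (Set.Icc a b) x| ≤
                C * (M₀ + ℓ ^ n * Mₙ) := by
  refine ⟨interpolationConst n, by unfold interpolationConst; positivity, ?_⟩
  intro a b hab ℓ hℓ f hf M₀ Mₙ h₀ hₙ j hj x hx
  have hfAt : ∀ u ∈ Ioo a b, ContDiffAt ℝ n f u := fun u hu ↦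
    hf.contDiffAt (Icc_mem_nhds hu.1 hu.2)
  have hderiv : ∀ k ≤ n, ∀ u ∈ Ioo a b,
      iteratedDerivWithin k f (Icc a b) u = iteratedDeriv k f u :=
    fun k hk u hu ↦ iteratedDerivWithin_eq_iteratedDeriv (uniqueDiffOn_Icc hab)
      ((hfAt u hu).of_le (by exact_mod_cast hk)) (Ioo_subset_Icc_self hu)
  have hcont : ContinuousWithinAt
      (fun y ↦ min ((b - a) ^ j) (ℓ ^ j) * |iteratedDerivWithin j f (Icc a b) y|) (Ioo a b) x :=
    (((hf.continuousOn_iteratedDerivWithin (by exact_mod_cast hj) (uniqueDiffOn_Icc hab))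
      x hx).abs.const_mul _).mono Ioo_subset_Icc_self
  refine hcont.closure_le (by rwa [closure_Ioo hab.ne]) continuousWithinAt_const fun y hy ↦ ?_
  rw [hderiv j hj y hy]
  exact min_pow_mul_abs_iteratedDeriv_le hab hℓ hfAt (fun u hu ↦ h₀ u (Ioo_subset_Icc_self hu))
    (fun u hu ↦ hderiv n le_rfl u hu ▸ hₙ u (Ioo_subset_Icc_self hu)) hj hy

/-- there is a constant `C_n` depending only on `n` such that for every
compact interval `I' = [a,b]`, every `ℓ > 0`, every `f ∈ C^n(I')`, and every
`j ∈ {0,…,n}`,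
`min{|I'|^j, ℓ^j} · sup_{I'} |f^{(j)}| ≤ C_n (sup_{I'} |f| + ℓ^n sup_{I'} |f^{(n)}|)`. -/
theorem statement15 (n : ℕ) (hn : 0 < n) :
    ∃ C : ℝ, 0 < C ∧
      ∀ a b : ℝ, a < b → ∀ ℓ : ℝ, 0 < ℓ →
        ∀ f : ℝ → ℝ, ContDiffOn ℝ n f (Set.Icc a b) →
          ∀ M₀ Mₙ : ℝ,
            (∀ x ∈ Set.Icc a b, |f x| ≤ M₀) →
            (∀ x ∈ Set.Icc a b, |iteratedDerivWithin n f (Set.Icc a b) x| ≤ Mₙ) →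
            ∀ j ≤ n, ∀ x ∈ Set.Icc a b,
              min ((b - a) ^ j) (ℓ ^ j) * |iteratedDerivWithin j f (Set.Icc a b) x| ≤
                C * (M₀ + ℓ ^ n * Mₙ) :=
  statement15_general n
end
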